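/- arXiv:1312.2128 — 4 statements merged into one kernel-verified Lean document; each statement's English description precedes it below -/
import Mathlib

section
/- Let p > 0 and d ≥ 1. There is a constant C, depending only on p and d, such that for all probability measures μ, ν on ℝ^d, D_p(μ,ν) ≤ C Σ_{n≥0} 2^{pn} Σ_{ℓ≥0} 2^{−pℓ} Σ_{F∈P_ℓ} |μ(2^n F ∩ B_n) − ν(2^n F ∩ B_n)|, where 2^n F := {2^n x : x ∈ F}. -/
/-!
Fix an annulus `B_n` and write `a_F = μ(2^n F ∩ B_n)`, `b_F = ν(2^n F ∩ B_n)`, `A = μ(B_n)`,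
`B = ν(B_n)`. The rescaled measures `R_{B_n} μ`, `R_{B_n} ν` give the cube `F` the masses `a_F / A`
and `b_F / B`, and at every level `ℓ` the sums `min(A, B) ∑_F |a_F / A - b_F / B|` and
`∑_F |a_F - b_F|` differ by at most `|A - B|`, which is the level-`0` dyadic term. Weighting by
`2^{-pℓ}` and using `∑_{ℓ ≥ 1} 2^{-pℓ} = 1 / (2^p - 1)`, the `n`-th term of `D_p(μ, ν)` and the
`n`-th dyadic sum are comparable in both directions with constants depending only on `p`.
-/

open MeasureTheory ProbabilityTheory Real Set ENNReal NNReal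

noncomputable section

/-- `T_p(μ,ν)`: infimum over couplings of `∫ |x-y|^p`. -/
def Tcost (d : ℕ) (p : ℝ) (μ ν : Measure (EuclideanSpace ℝ (Fin d))) : ℝ :=
  sInf { r : ℝ | ∃ ξ : Measure (EuclideanSpace ℝ (Fin d) × EuclideanSpace ℝ (Fin d)),
    ξ.fst = μ ∧ ξ.snd = ν ∧ r = ∫ z, ‖z.1 - z.2‖ ^ p ∂ξ }

/-- empirical measure of the points `X 0, ..., X (N-1)`. -/
def empMeas (d N : ℕ) (X : ℕ → EuclideanSpace ℝ (Fin d)) : Measure (EuclideanSpace ℝ (Fin d)) :=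
  ((N : ℝ≥0∞))⁻¹ • ∑ k ∈ Finset.range N, Measure.dirac (X k)

/-- the cube of the partition `P_ℓ` of `(-1,1]^d` indexed by `k`. -/
def cube (d ℓ : ℕ) (k : Fin d → Fin (2 ^ ℓ)) : Set (EuclideanSpace ℝ (Fin d)) :=
  {x | ∀ i, x i ∈ Set.Ioc (-1 + (k i : ℝ) * 2 ^ (1 - (ℓ : ℤ)))
    (-1 + ((k i : ℝ) + 1) * 2 ^ (1 - (ℓ : ℤ)))}

/-- `D_p` for measures on `(-1,1]^d`. -/
def DpCpt (d : ℕ) (p : ℝ) (μ ν : Measure (EuclideanSpace ℝ (Fin d))) : ℝ :=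
  (2 ^ p - 1) / 2 * ∑' ℓ : ℕ, 2 ^ (-(p * ((ℓ : ℝ) + 1))) *
    ∑ k : Fin d → Fin (2 ^ (ℓ + 1)),
      |(μ (cube d (ℓ + 1) k)).toReal - (ν (cube d (ℓ + 1) k)).toReal|

/-- the annuli `B_n`. -/
def Bset (d n : ℕ) : Set (EuclideanSpace ℝ (Fin d)) :=
  if n = 0 then {x | ∀ i, x i ∈ Set.Ioc (-1 : ℝ) 1}
  else {x | ∀ i, x i ∈ Set.Ioc (-(2 : ℝ) ^ n) ((2 : ℝ) ^ n)} \
    {x | ∀ i, x i ∈ Set.Ioc (-(2 : ℝ) ^ (n - 1)) ((2 : ℝ) ^ (n - 1))}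

/-- `R_{B_n} μ`: image of `μ|_{B_n}/μ(B_n)` by `x ↦ x/2^n`. -/
def Rres (d n : ℕ) (μ : Measure (EuclideanSpace ℝ (Fin d))) :
    Measure (EuclideanSpace ℝ (Fin d)) :=
  Measure.map (fun x => ((2 : ℝ) ^ n)⁻¹ • x) ((μ (Bset d n))⁻¹ • μ.restrict (Bset d n))

/-- `D_p` for measures on `ℝ^d`. -/
def Dp (d : ℕ) (p : ℝ) (μ ν : Measure (EuclideanSpace ℝ (Fin d))) : ℝ :=
  ∑' n : ℕ, 2 ^ (p * n) *
    (|(μ (Bset d n)).toReal - (ν (Bset d n)).toReal| +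
      min (μ (Bset d n)).toReal (ν (Bset d n)).toReal *
        DpCpt d p (Rres d n μ) (Rres d n ν))

/-- `f(x) = (1+x)log(1+x) - x`. -/
def fBen (x : ℝ) : ℝ := (1 + x) * Real.log (1 + x) - x

/-- `g(x) = (x log x - x + 1) 1_{x ≥ 1}`. -/
def gBen (x : ℝ) : ℝ := if 1 ≤ x then x * Real.log x - x + 1 else 0

open scoped Pointwise

lemma mem_Ioc_iff_natCeil_eq {t : ℝ} (j : ℕ) : t ∈ Ioc (j : ℝ) (j + 1) ↔ ⌈t⌉₊ = j + 1 := by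
  rw [Nat.ceil_eq_iff j.succ_ne_zero]
  simp [mem_Ioc]

lemma mem_Ioc_zero_iff_exists_mem_Ioc {t : ℝ} (N : ℕ) :
    t ∈ Ioc 0 (N : ℝ) ↔ ∃ j < N, t ∈ Ioc (j : ℝ) (j + 1) := by
  constructor
  · rintro ⟨ht0, htN⟩
    have hceil : ⌈t⌉₊ ≠ 0 := (Nat.ceil_pos.mpr ht0).ne'
    refine ⟨⌈t⌉₊ - 1, by have := Nat.ceil_le.mpr htN; omega, ?_⟩
    rw [mem_Ioc_iff_natCeil_eq]
    omega
  · rintro ⟨j, hjN, hjt, htj⟩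
    have : (j : ℝ) + 1 ≤ N := by exact_mod_cast hjN
    exact ⟨lt_of_le_of_lt j.cast_nonneg hjt, htj.trans this⟩

lemma mem_Ioc_neg_one_add_mul_iff {a b h t : ℝ} (hh : 0 < h) :
    t ∈ Ioc (-1 + a * h) (-1 + b * h) ↔ (t + 1) / h ∈ Ioc a b := by
  simp only [mem_Ioc, lt_div_iff₀ hh, div_le_iff₀ hh]
  constructor <;> rintro ⟨h₁, h₂⟩ <;> constructor <;> linarith

lemma mem_cube_iff {d ℓ : ℕ} {k : Fin d → Fin (2 ^ ℓ)} {x : EuclideanSpace ℝ (Fin d)} :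
    x ∈ cube d ℓ k ↔ ∀ i, (x i + 1) / 2 ^ (1 - (ℓ : ℤ)) ∈ Ioc ((k i : ℕ) : ℝ) ((k i : ℕ) + 1) :=
  forall_congr' fun _ => mem_Ioc_neg_one_add_mul_iff (by positivity)

lemma mem_Bset_zero_iff {d : ℕ} (ℓ : ℕ) {x : EuclideanSpace ℝ (Fin d)} :
    x ∈ Bset d 0 ↔ ∀ i, (x i + 1) / 2 ^ (1 - (ℓ : ℤ)) ∈ Ioc 0 ((2 ^ ℓ : ℕ) : ℝ) := by
  -- `(-1, 1] = (-1 + 0 * h, -1 + 2 ^ ℓ * h]` for the side length `h = 2 ^ (1 - ℓ)` of level `ℓ`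
  have hside : ((2 ^ ℓ : ℕ) : ℝ) * 2 ^ (1 - (ℓ : ℤ)) = 2 := by
    rw [Nat.cast_pow, Nat.cast_ofNat, ← zpow_natCast, ← zpow_add₀ two_ne_zero]
    norm_num
  simp only [Bset]
  refine forall_congr' fun i => ?_
  rw [← mem_Ioc_neg_one_add_mul_iff (by positivity), hside, zero_mul]
  norm_num

lemma pairwise_disjoint_cube (d ℓ : ℕ) : Pairwise (Function.onFun Disjoint (cube d ℓ)) := by
  intro k k' hkk'
  refine Set.disjoint_left.mpr fun x hx hx' => hkk' (funext fun i => Fin.ext ?_)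
  have h := (mem_Ioc_iff_natCeil_eq _).mp (mem_cube_iff.mp hx i)
  have h' := (mem_Ioc_iff_natCeil_eq _).mp (mem_cube_iff.mp hx' i)
  omega

lemma iUnion_cube (d ℓ : ℕ) : ⋃ k, cube d ℓ k = Bset d 0 := by
  ext x
  simp only [mem_iUnion, mem_cube_iff, mem_Bset_zero_iff ℓ, mem_Ioc_zero_iff_exists_mem_Ioc]
  constructor
  · rintro ⟨k, hk⟩ i
    exact ⟨k i, (k i).isLt, hk i⟩
  · intro h
    choose j hj hmem using h
    exact ⟨fun i => ⟨j i, hj i⟩, hmem⟩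

lemma measurableSet_box {d : ℕ} (a b : Fin d → ℝ) :
    MeasurableSet {x : EuclideanSpace ℝ (Fin d) | ∀ i, x i ∈ Ioc (a i) (b i)} := by
  simp only [ofPred_forall]
  exact MeasurableSet.iInter fun i =>
    measurableSet_Ioc.preimage (EuclideanSpace.proj (𝕜 := ℝ) i).continuous.measurable

lemma measurableSet_cube (d ℓ : ℕ) (k : Fin d → Fin (2 ^ ℓ)) : MeasurableSet (cube d ℓ k) :=
  measurableSet_box _ _

lemma measurableSet_Bset (d n : ℕ) : MeasurableSet (Bset d n) := by
  unfold Bset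
  split_ifs
  · exact measurableSet_box _ _
  · exact (measurableSet_box _ _).diff (measurableSet_box _ _)

lemma Bset_subset_smul_Bset_zero (d n : ℕ) : Bset d n ⊆ (2 : ℝ) ^ n • Bset d 0 := by
  intro x hx
  have hbox : ∀ i, x i ∈ Ioc (-(2 : ℝ) ^ n) (2 ^ n) := by
    unfold Bset at hx
    split_ifs at hx with hn
    · simpa [hn] using hx
    · exact hx.1
  rw [mem_smul_set_iff_inv_smul_mem₀ (by positivity)]
  simp only [Bset]
  intro i
  have h2n : (0 : ℝ) < 2 ^ n := by positivity
  obtain ⟨hlo, hhi⟩ := hbox i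
  simp only [PiLp.smul_apply, smul_eq_mul, mem_Ioc]
  constructor
  · rw [lt_inv_mul_iff₀ h2n]; linarith
  · rw [inv_mul_le_iff₀ h2n]; linarith

lemma abs_sum_abs_add_sub_sum_abs_le {ι : Type*} (s : Finset ι) (x y : ι → ℝ) :
    |∑ i ∈ s, |x i + y i| - (∑ i ∈ s, |x i|)| ≤ ∑ i ∈ s, |y i| := by
  rw [← Finset.sum_sub_distrib]
  refine (Finset.abs_sum_le_sum_abs _ _).trans (Finset.sum_le_sum fun i _ => ?_)
  simpa using abs_abs_sub_abs_le_abs_sub (x i + y i) (x i)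

lemma abs_min_mul_sum_abs_inv_mul_sub_sub_le {ι : Type*} [Fintype ι] {a b : ι → ℝ}
    (ha : 0 ≤ a) (hb : 0 ≤ b) :
    |min (∑ i, a i) (∑ i, b i) * ∑ i, |(∑ j, a j)⁻¹ * a i - (∑ j, b j)⁻¹ * b i|
        - (∑ i, |a i - b i|)| ≤ |∑ i, a i - ∑ i, b i| := by
  wlog hAB : ∑ i, a i ≤ ∑ i, b i generalizing a b
  · have h := this hb ha (le_of_not_ge hAB)
    simp only [abs_sub_comm (b _), abs_sub_comm (_ * b _)] at h
    rwa [min_comm, abs_sub_comm (∑ i, b i)] at h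
  set A := ∑ i, a i
  set B := ∑ i, b i
  have hA : 0 ≤ A := Finset.sum_nonneg fun i _ => ha i
  have haA : ∀ i, A = 0 → a i = 0 := fun i hA0 =>
    (Finset.sum_eq_zero_iff_of_nonneg fun j _ => ha j).mp hA0 i (Finset.mem_univ i)
  -- rescaling by `A = min A B` leaves `a` and moves `b` by the nonnegative `(1 - A / B) • b`
  have hrescale : ∀ i, A * |A⁻¹ * a i - B⁻¹ * b i| = |(a i - b i) + (1 - A / B) * b i| := by
    intro i
    rw [← abs_of_nonneg hA, ← abs_mul, abs_of_nonneg hA]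
    congr 1
    rcases eq_or_ne A 0 with hA0 | hA0
    · simp [hA0, haA i hA0]
    · field_simp
      ring
  have hcoef : 0 ≤ 1 - A / B := sub_nonneg.mpr (div_le_one_of_le₀ hAB (hA.trans hAB))
  have hmass : ∑ i, |(1 - A / B) * b i| = |A - B| := by
    simp only [abs_mul, abs_of_nonneg hcoef, abs_of_nonneg (hb _), ← Finset.mul_sum]
    rw [abs_of_nonpos (by linarith), sub_mul, one_mul,
      div_mul_cancel_of_imp fun hB0 => le_antisymm (hB0 ▸ hAB) hA]
    ring
  rw [min_eq_left hAB, Finset.mul_sum, ← hmass]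
  simp only [hrescale]
  exact abs_sum_abs_add_sub_sum_abs_le _ _ _

section GeometricWeights

variable {r : ℝ}

lemma summable_inv_pow_mul (hr : 1 < r) {f : ℕ → ℝ} {M : ℝ} (hf : 0 ≤ f) (hfM : ∀ ℓ, f ℓ ≤ M) :
    Summable fun ℓ => r⁻¹ ^ ℓ * f ℓ := by
  have hq : 0 ≤ r⁻¹ := by positivity
  refine .of_nonneg_of_le (fun ℓ => mul_nonneg (pow_nonneg hq ℓ) (hf ℓ))
    (fun ℓ => mul_le_mul_of_nonneg_left (hfM ℓ) (pow_nonneg hq ℓ)) ?_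
  exact (summable_geometric_of_lt_one hq (inv_lt_one_of_one_lt₀ hr)).mul_right M

lemma tsum_inv_pow_succ_mul_le (hr : 1 < r) {f g : ℕ → ℝ} {a : ℝ}
    (hf : Summable fun ℓ => r⁻¹ ^ ℓ * f ℓ) (hg : Summable fun ℓ => r⁻¹ ^ ℓ * g ℓ)
    (hfg : ∀ ℓ, f ℓ ≤ g ℓ + a) :
    ∑' ℓ, r⁻¹ ^ (ℓ + 1) * f (ℓ + 1) ≤ ∑' ℓ, r⁻¹ ^ (ℓ + 1) * g (ℓ + 1) + a / (r - 1) := by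
  have hgeom : HasSum (fun ℓ : ℕ => r⁻¹ ^ (ℓ + 1) * a) (a / (r - 1)) := by
    have hval : r⁻¹ * a * (1 - r⁻¹)⁻¹ = a / (r - 1) := by
      have : r - 1 ≠ 0 := by linarith
      field_simp
    rw [← hval]
    exact ((hasSum_geometric_of_lt_one (by positivity) (inv_lt_one_of_one_lt₀ hr)).mul_left
      (r⁻¹ * a)).congr_fun fun ℓ => by ring
  refine hasSum_le (fun ℓ => ?_) ((_root_.summable_nat_add_iff 1).mpr hf).hasSum
    (((_root_.summable_nat_add_iff 1).mpr hg).hasSum.add hgeom)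
  rw [← mul_add]
  exact mul_le_mul_of_nonneg_left (hfg _) (by positivity)

variable {S U : ℕ → ℝ} {M : ℝ}

lemma summable_inv_pow_mul_of_abs_sub_le (hr : 1 < r) (hU : 0 ≤ U) (hSM : ∀ ℓ, S ℓ ≤ M)
    (hUS : ∀ ℓ, |U ℓ - S ℓ| ≤ S 0) : Summable fun ℓ => r⁻¹ ^ ℓ * U ℓ :=
  summable_inv_pow_mul (M := M + S 0) hr hU fun ℓ => by
    linarith [(abs_sub_le_iff.mp (hUS ℓ)).1, hSM ℓ]

lemma add_mul_tsum_le_mul_tsum (hr : 1 < r) (hS : 0 ≤ S) (hU : 0 ≤ U) (hSM : ∀ ℓ, S ℓ ≤ M)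
    (hUS : ∀ ℓ, |U ℓ - S ℓ| ≤ S 0) :
    S 0 + (r - 1) / 2 * ∑' ℓ, r⁻¹ ^ (ℓ + 1) * U (ℓ + 1) ≤ (r + 2) / 2 * ∑' ℓ, r⁻¹ ^ ℓ * S ℓ := by
  have hr1 : 0 < r - 1 := by linarith
  have hSsum := summable_inv_pow_mul hr hS hSM
  have hUsum := summable_inv_pow_mul_of_abs_sub_le hr hU hSM hUS
  have hZY := tsum_inv_pow_succ_mul_le (a := S 0) hr hUsum hSsum fun ℓ => by
    linarith [(abs_sub_le_iff.mp (hUS ℓ)).1]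
  set Y := ∑' ℓ, r⁻¹ ^ (ℓ + 1) * S (ℓ + 1)
  have hY : 0 ≤ Y := tsum_nonneg fun ℓ => mul_nonneg (by positivity) (hS _)
  have hregroup : (r + 2) / 2 * (S 0 + Y) =
      S 0 + (r - 1) / 2 * (Y + S 0 / (r - 1)) + ((r - 1) / 2 * S 0 + 3 / 2 * Y) := by
    field_simp
    ring
  rw [hSsum.tsum_eq_zero_add, pow_zero, one_mul, hregroup]
  have := mul_le_mul_of_nonneg_left hZY (by positivity : 0 ≤ (r - 1) / 2)
  have := mul_nonneg hr1.le (hS 0)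
  linarith

lemma tsum_le_mul_add_mul_tsum (hr : 1 < r) (hS : 0 ≤ S) (hU : 0 ≤ U) (hSM : ∀ ℓ, S ℓ ≤ M)
    (hUS : ∀ ℓ, |U ℓ - S ℓ| ≤ S 0) :
    ∑' ℓ, r⁻¹ ^ ℓ * S ℓ ≤
      (r + 1) / (r - 1) * (S 0 + (r - 1) / 2 * ∑' ℓ, r⁻¹ ^ (ℓ + 1) * U (ℓ + 1)) := by
  have hr1 : 0 < r - 1 := by linarith
  have hSsum := summable_inv_pow_mul hr hS hSM
  have hUsum := summable_inv_pow_mul_of_abs_sub_le hr hU hSM hUS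
  have hYZ := tsum_inv_pow_succ_mul_le (a := S 0) hr hSsum hUsum fun ℓ => by
    linarith [(abs_sub_le_iff.mp (hUS ℓ)).2]
  set Z := ∑' ℓ, r⁻¹ ^ (ℓ + 1) * U (ℓ + 1)
  have hZ : 0 ≤ Z := tsum_nonneg fun ℓ => mul_nonneg (by positivity) (hU _)
  have hregroup : (r + 1) / (r - 1) * (S 0 + (r - 1) / 2 * Z) =
      S 0 + (Z + S 0 / (r - 1)) + (S 0 / (r - 1) + (r - 1) / 2 * Z) := by
    field_simp
    ring
  rw [hSsum.tsum_eq_zero_add, pow_zero, one_mul, hregroup]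
  have := div_nonneg (hS 0) hr1.le
  have := mul_nonneg (by positivity : 0 ≤ (r - 1) / 2) hZ
  linarith

end GeometricWeights

def dyadicDiscrepancy (d n ℓ : ℕ) (μ ν : Measure (EuclideanSpace ℝ (Fin d))) : ℝ :=
  ∑ k : Fin d → Fin (2 ^ ℓ),
    |(μ ((fun x : EuclideanSpace ℝ (Fin d) => (2 : ℝ) ^ n • x) '' cube d ℓ k ∩ Bset d n)).toReal -
      (ν ((fun x : EuclideanSpace ℝ (Fin d) => (2 : ℝ) ^ n • x) '' cube d ℓ k ∩ Bset d n)).toReal|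

def cubeDiscrepancy (d ℓ : ℕ) (μ ν : Measure (EuclideanSpace ℝ (Fin d))) : ℝ :=
  ∑ k : Fin d → Fin (2 ^ ℓ), |(μ (cube d ℓ k)).toReal - (ν (cube d ℓ k)).toReal|

lemma dyadicDiscrepancy_nonneg (d n ℓ : ℕ) (μ ν : Measure (EuclideanSpace ℝ (Fin d))) :
    0 ≤ dyadicDiscrepancy d n ℓ μ ν :=
  Finset.sum_nonneg fun _ _ => abs_nonneg _

lemma cubeDiscrepancy_nonneg (d ℓ : ℕ) (μ ν : Measure (EuclideanSpace ℝ (Fin d))) :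
    0 ≤ cubeDiscrepancy d ℓ μ ν :=
  Finset.sum_nonneg fun _ _ => abs_nonneg _

lemma rpow_neg_mul_natCast {x : ℝ} (hx : 0 ≤ x) (p : ℝ) (ℓ : ℕ) :
    x ^ (-(p * ℓ)) = (x ^ p)⁻¹ ^ ℓ := by
  rw [← mul_neg, Real.rpow_mul hx, Real.rpow_neg (Real.rpow_nonneg hx p), Real.rpow_natCast,
    inv_pow]

lemma DpCpt_eq (d : ℕ) (p : ℝ) (μ ν : Measure (EuclideanSpace ℝ (Fin d))) :
    DpCpt d p μ ν =
      (2 ^ p - 1) / 2 * ∑' ℓ : ℕ, ((2 : ℝ) ^ p)⁻¹ ^ (ℓ + 1) * cubeDiscrepancy d (ℓ + 1) μ ν := by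
  simp only [DpCpt, cubeDiscrepancy, ← rpow_neg_mul_natCast zero_le_two, Nat.cast_succ]

lemma DpCpt_nonneg (d : ℕ) {p : ℝ} (hp : 0 ≤ p) (μ ν : Measure (EuclideanSpace ℝ (Fin d))) :
    0 ≤ DpCpt d p μ ν := by
  have h2p : 0 ≤ (2 : ℝ) ^ p - 1 := sub_nonneg.mpr (Real.one_le_rpow one_le_two hp)
  rw [DpCpt_eq]
  exact mul_nonneg (by positivity) (tsum_nonneg fun ℓ =>
    mul_nonneg (by positivity) (cubeDiscrepancy_nonneg d _ μ ν))

lemma Rres_apply (d n : ℕ) (μ : Measure (EuclideanSpace ℝ (Fin d)))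
    {s : Set (EuclideanSpace ℝ (Fin d))} (hs : MeasurableSet s) :
    Rres d n μ s = (μ (Bset d n))⁻¹ * μ ((2 : ℝ) ^ n • s ∩ Bset d n) := by
  rw [Rres, Measure.map_apply (measurable_const_smul _) hs, Measure.smul_apply,
    Measure.restrict_apply' (measurableSet_Bset d n), preimage_smul_inv₀ (by positivity),
    smul_eq_mul]

lemma sum_measure_smul_cube_inter_Bset (d n ℓ : ℕ) (μ : Measure (EuclideanSpace ℝ (Fin d))) :
    ∑ k : Fin d → Fin (2 ^ ℓ), μ ((2 : ℝ) ^ n • cube d ℓ k ∩ Bset d n) = μ (Bset d n) := by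
  have h2n : (2 : ℝ) ^ n ≠ 0 := by positivity
  have hunion : ⋃ k, ((2 : ℝ) ^ n • cube d ℓ k ∩ Bset d n) = Bset d n := by
    rw [← iUnion_inter, ← smul_set_iUnion, iUnion_cube]
    exact inter_eq_self_of_subset_right (Bset_subset_smul_Bset_zero d n)
  have hdisj : Pairwise (Function.onFun Disjoint fun k => (2 : ℝ) ^ n • cube d ℓ k ∩ Bset d n) :=
    fun k k' hkk' => (disjoint_image_of_injective (smul_right_injective _ h2n)
      (pairwise_disjoint_cube d ℓ hkk')).mono inter_subset_left inter_subset_left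
  have hadd := measure_iUnion (μ := μ) hdisj fun k =>
    ((measurableSet_cube d ℓ k).const_smul₀ ((2 : ℝ) ^ n)).inter (measurableSet_Bset d n)
  rwa [hunion, tsum_fintype, eq_comm] at hadd

def annulusDp (d : ℕ) (p : ℝ) (μ ν : Measure (EuclideanSpace ℝ (Fin d))) (n : ℕ) : ℝ :=
  |(μ (Bset d n)).toReal - (ν (Bset d n)).toReal| +
    min (μ (Bset d n)).toReal (ν (Bset d n)).toReal * DpCpt d p (Rres d n μ) (Rres d n ν)

def annulusDyadicSum (d : ℕ) (p : ℝ) (μ ν : Measure (EuclideanSpace ℝ (Fin d))) (n : ℕ) : ℝ :=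
  ∑' ℓ : ℕ, (2 : ℝ) ^ (-(p * ℓ)) * dyadicDiscrepancy d n ℓ μ ν

section Annulus

variable {d : ℕ} {p : ℝ} (n : ℕ) (μ ν : Measure (EuclideanSpace ℝ (Fin d)))

lemma sum_toReal_measure_smul_cube_inter_Bset [IsFiniteMeasure μ] (ℓ : ℕ) :
    ∑ k : Fin d → Fin (2 ^ ℓ), (μ ((2 : ℝ) ^ n • cube d ℓ k ∩ Bset d n)).toReal =
      (μ (Bset d n)).toReal := by
  rw [← ENNReal.toReal_sum fun _ _ => measure_ne_top μ _, sum_measure_smul_cube_inter_Bset]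

lemma dyadicDiscrepancy_zero [IsFiniteMeasure μ] [IsFiniteMeasure ν] :
    dyadicDiscrepancy d n 0 μ ν = |(μ (Bset d n)).toReal - (ν (Bset d n)).toReal| := by
  have : Subsingleton (Fin (2 ^ 0)) := inferInstanceAs (Subsingleton (Fin 1))
  have hμ := sum_toReal_measure_smul_cube_inter_Bset n μ 0
  have hν := sum_toReal_measure_smul_cube_inter_Bset n ν 0
  rw [Fintype.sum_subsingleton _ 0] at hμ hν
  rw [dyadicDiscrepancy, Fintype.sum_subsingleton _ 0]
  simp only [image_smul, hμ, hν]

lemma dyadicDiscrepancy_le [IsFiniteMeasure μ] [IsFiniteMeasure ν] (ℓ : ℕ) :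
    dyadicDiscrepancy d n ℓ μ ν ≤ (μ (Bset d n)).toReal + (ν (Bset d n)).toReal := by
  rw [← sum_toReal_measure_smul_cube_inter_Bset n μ ℓ,
    ← sum_toReal_measure_smul_cube_inter_Bset n ν ℓ, ← Finset.sum_add_distrib, dyadicDiscrepancy]
  simp only [image_smul]
  exact Finset.sum_le_sum fun k _ => (abs_sub _ _).trans_eq (by simp)

lemma abs_min_mul_cubeDiscrepancy_Rres_sub_le [IsFiniteMeasure μ] [IsFiniteMeasure ν] (ℓ : ℕ) :
    |min (μ (Bset d n)).toReal (ν (Bset d n)).toReal *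
        cubeDiscrepancy d ℓ (Rres d n μ) (Rres d n ν) - dyadicDiscrepancy d n ℓ μ ν| ≤
      dyadicDiscrepancy d n 0 μ ν := by
  rw [dyadicDiscrepancy_zero]
  have hRres : ∀ (ρ : Measure (EuclideanSpace ℝ (Fin d))) (k : Fin d → Fin (2 ^ ℓ)),
      (Rres d n ρ (cube d ℓ k)).toReal =
        (ρ (Bset d n)).toReal⁻¹ * (ρ ((2 : ℝ) ^ n • cube d ℓ k ∩ Bset d n)).toReal := by
    intro ρ k
    rw [Rres_apply d n ρ (measurableSet_cube d ℓ k), ENNReal.toReal_mul, ENNReal.toReal_inv]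
  simp only [cubeDiscrepancy, dyadicDiscrepancy, image_smul, hRres]
  rw [← sum_toReal_measure_smul_cube_inter_Bset n μ ℓ,
    ← sum_toReal_measure_smul_cube_inter_Bset n ν ℓ]
  exact abs_min_mul_sum_abs_inv_mul_sub_sub_le (fun _ => ENNReal.toReal_nonneg)
    (fun _ => ENNReal.toReal_nonneg)

lemma annulusDp_eq [IsFiniteMeasure μ] [IsFiniteMeasure ν] :
    annulusDp d p μ ν n = dyadicDiscrepancy d n 0 μ ν + (2 ^ p - 1) / 2 *
      ∑' ℓ : ℕ, ((2 : ℝ) ^ p)⁻¹ ^ (ℓ + 1) * (min (μ (Bset d n)).toReal (ν (Bset d n)).toReal *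
        cubeDiscrepancy d (ℓ + 1) (Rres d n μ) (Rres d n ν)) := by
  rw [annulusDp, DpCpt_eq, dyadicDiscrepancy_zero, mul_left_comm, ← _root_.tsum_mul_left]
  simp only [mul_left_comm (min _ _)]

lemma annulusDyadicSum_eq :
    annulusDyadicSum d p μ ν n =
      ∑' ℓ : ℕ, ((2 : ℝ) ^ p)⁻¹ ^ ℓ * dyadicDiscrepancy d n ℓ μ ν := by
  simp only [annulusDyadicSum, rpow_neg_mul_natCast zero_le_two]

lemma annulusDp_le [IsFiniteMeasure μ] [IsFiniteMeasure ν] (hp : 0 < p) :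
    annulusDp d p μ ν n ≤ (2 ^ p + 2) / 2 * annulusDyadicSum d p μ ν n := by
  rw [annulusDp_eq, annulusDyadicSum_eq]
  exact add_mul_tsum_le_mul_tsum (Real.one_lt_rpow one_lt_two hp)
    (fun ℓ => dyadicDiscrepancy_nonneg d n ℓ μ ν)
    (fun ℓ => mul_nonneg (le_min ENNReal.toReal_nonneg ENNReal.toReal_nonneg)
      (cubeDiscrepancy_nonneg d ℓ _ _))
    (dyadicDiscrepancy_le n μ ν) (abs_min_mul_cubeDiscrepancy_Rres_sub_le n μ ν)

lemma annulusDyadicSum_le [IsFiniteMeasure μ] [IsFiniteMeasure ν] (hp : 0 < p) :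
    annulusDyadicSum d p μ ν n ≤ (2 ^ p + 1) / (2 ^ p - 1) * annulusDp d p μ ν n := by
  rw [annulusDp_eq, annulusDyadicSum_eq]
  exact tsum_le_mul_add_mul_tsum (Real.one_lt_rpow one_lt_two hp)
    (fun ℓ => dyadicDiscrepancy_nonneg d n ℓ μ ν)
    (fun ℓ => mul_nonneg (le_min ENNReal.toReal_nonneg ENNReal.toReal_nonneg)
      (cubeDiscrepancy_nonneg d ℓ _ _))
    (dyadicDiscrepancy_le n μ ν) (abs_min_mul_cubeDiscrepancy_Rres_sub_le n μ ν)

end Annulus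

/-- Comparability in both directions is needed because `∑'` of a non-summable family is `0`. -/
lemma tsum_le_mul_tsum_of_le_mul {ι : Type*} {f g : ι → ℝ} {C K : ℝ} (hf : 0 ≤ f) (hg : 0 ≤ g)
    (hfg : ∀ i, f i ≤ C * g i) (hgf : ∀ i, g i ≤ K * f i) : ∑' i, f i ≤ C * ∑' i, g i := by
  by_cases hgs : Summable g
  · have hCg := hgs.mul_left C
    exact (Summable.tsum_le_tsum hfg (.of_nonneg_of_le hf hfg hCg) hCg).trans_eq
      _root_.tsum_mul_left
  · have hfs : ¬ Summable f := fun hfs => hgs (.of_nonneg_of_le hg hgf (hfs.mul_left K))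
    simp [tsum_eq_zero_of_not_summable hfs, tsum_eq_zero_of_not_summable hgs]

theorem Dp_le_sum_dyadic_general (d : ℕ) (p : ℝ) (hp : 0 < p) :
    ∃ C : ℝ, 0 < C ∧
      ∀ μ ν : Measure (EuclideanSpace ℝ (Fin d)),
        IsProbabilityMeasure μ → IsProbabilityMeasure ν →
        Dp d p μ ν ≤
          C * ∑' n : ℕ, (2 : ℝ) ^ (p * n) * ∑' ℓ : ℕ, (2 : ℝ) ^ (-(p * ℓ)) *
            ∑ k : Fin d → Fin (2 ^ ℓ),
              |(μ ((fun x : EuclideanSpace ℝ (Fin d) => (2 : ℝ) ^ n • x) '' cube d ℓ k ∩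
                  Bset d n)).toReal -
                (ν ((fun x : EuclideanSpace ℝ (Fin d) => (2 : ℝ) ^ n • x) '' cube d ℓ k ∩
                  Bset d n)).toReal| := by
  refine ⟨(2 ^ p + 2) / 2, by positivity, fun μ ν _ _ => ?_⟩
  change ∑' n : ℕ, 2 ^ (p * n) * annulusDp d p μ ν n ≤
    (2 ^ p + 2) / 2 * ∑' n : ℕ, 2 ^ (p * n) * annulusDyadicSum d p μ ν n
  refine tsum_le_mul_tsum_of_le_mul (K := (2 ^ p + 1) / (2 ^ p - 1)) (fun n => ?_) (fun n => ?_)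
    (fun n => ?_) (fun n => ?_)
  · exact mul_nonneg (by positivity) (add_nonneg (abs_nonneg _)
      (mul_nonneg (le_min ENNReal.toReal_nonneg ENNReal.toReal_nonneg) (DpCpt_nonneg d hp.le _ _)))
  · exact mul_nonneg (by positivity) (tsum_nonneg fun ℓ =>
      mul_nonneg (by positivity) (dyadicDiscrepancy_nonneg d n ℓ μ ν))
  · rw [mul_left_comm]
    exact mul_le_mul_of_nonneg_left (annulusDp_le n μ ν hp) (by positivity)
  · rw [mul_left_comm]
    exact mul_le_mul_of_nonneg_left (annulusDyadicSum_le n μ ν hp) (by positivity)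

/-- Lemma 6 of Fournier-Guillin: `D_p(μ,ν)` is bounded by the weighted sums of
`|μ(2^n F ∩ B_n) - ν(2^n F ∩ B_n)|` over the dyadic partitions. -/
theorem Dp_le_sum_dyadic (d : ℕ) (hd : 1 ≤ d) (p : ℝ) (hp : 0 < p) :
    ∃ C : ℝ, 0 < C ∧
      ∀ μ ν : Measure (EuclideanSpace ℝ (Fin d)),
        IsProbabilityMeasure μ → IsProbabilityMeasure ν →
        Dp d p μ ν ≤
          C * ∑' n : ℕ, (2 : ℝ) ^ (p * n) * ∑' ℓ : ℕ, (2 : ℝ) ^ (-(p * ℓ)) *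
            ∑ k : Fin d → Fin (2 ^ ℓ),
              |(μ ((fun x : EuclideanSpace ℝ (Fin d) => (2 : ℝ) ^ n • x) '' cube d ℓ k ∩
                  Bset d n)).toReal -
                (ν ((fun x : EuclideanSpace ℝ (Fin d) => (2 : ℝ) ^ n • x) '' cube d ℓ k ∩
                  Bset d n)).toReal| :=
  Dp_le_sum_dyadic_general d p hp

end
end

section
/- Let N ≥ 1 and let X be a Poisson(N)-distributed random variable. Then for every integer k with 0 ≤ k ≤ ⌊√N⌋, P(X = N + k) ≥ κ_0 N^{−1/2}, where κ_0 = e^{−2}/√2. -/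
open MeasureTheory ProbabilityTheory Real Set ENNReal NNReal

noncomputable section

/-!
By Stirling's upper bound `n! ≤ e √n (n / e) ^ n`, for `n = N + k`,
`e^{-N} N^n / n! ≥ e^{k-1} (N / n) ^ n / √n`. Since `(1 + k / N) ^ n ≤ e^{k + k² / N} ≤ e^{k+1}`
and `n ≤ 2N` when `k ≤ √N`, this is at least `e^{-2} / √(2N)`.
-/

open Nat in
theorem factorial_le_exp_one_mul_sqrt_mul_div_exp_pow {n : ℕ} (hn : n ≠ 0) :
    (n ! : ℝ) ≤ exp 1 * √n * (n / exp 1) ^ n := by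
  have hs : Stirling.stirlingSeq n ≤ exp 1 / √2 := by
    obtain ⟨m, rfl⟩ := Nat.exists_eq_succ_of_ne_zero hn
    simpa [Stirling.stirlingSeq_one] using Stirling.stirlingSeq'_antitone (Nat.zero_le m)
  rw [Stirling.stirlingSeq, div_le_iff₀ (by positivity), sqrt_mul zero_le_two] at hs
  calc (n ! : ℝ) ≤ exp 1 / √2 * (√2 * √n * (n / exp 1) ^ n) := hs
    _ = exp 1 * √n * (n / exp 1) ^ n := by field_simp

theorem add_pow_le_pow_mul_exp {x y : ℝ} (hx : 0 < x) (hxy : 0 ≤ x + y) (m : ℕ) :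
    (x + y) ^ m ≤ x ^ m * exp (m * y / x) := by
  have hbase : x + y ≤ x * exp (y / x) := by
    have := add_one_le_exp (y / x)
    calc x + y = x * (y / x + 1) := by field_simp; ring
      _ ≤ x * exp (y / x) := by gcongr
  calc (x + y) ^ m ≤ (x * exp (y / x)) ^ m := by gcongr
    _ = x ^ m * exp (m * y / x) := by rw [mul_pow, ← exp_nat_mul, mul_div_assoc]

open Nat in
theorem factorial_add_le_of_mul_self_le {N k : ℕ} (hN : N ≠ 0) (hk : k * k ≤ N) :
    ((N + k)! : ℝ) ≤ exp 2 * √2 * √N * N ^ (N + k) / exp N := by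
  have hN₀ : (0 : ℝ) < N := by positivity
  have hkN : (k : ℝ) ≤ N := by exact_mod_cast (Nat.le_mul_self k).trans hk
  have hkk : (k : ℝ) * k ≤ N := by exact_mod_cast hk
  have hsqrt : √((N : ℝ) + k) ≤ √2 * √N := by
    rw [← sqrt_mul zero_le_two]; gcongr; linarith
  have hexp : ((N + k : ℕ) : ℝ) * k / N ≤ k + 1 := by
    rw [div_le_iff₀ hN₀]; push_cast; nlinarith
  calc ((N + k)! : ℝ)
      ≤ exp 1 * √((N + k : ℕ) : ℝ) * (((N + k : ℕ) : ℝ) / exp 1) ^ (N + k) :=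
        factorial_le_exp_one_mul_sqrt_mul_div_exp_pow (by omega)
    _ = exp 1 * √((N : ℝ) + k) * ((N : ℝ) + k) ^ (N + k) / exp ((N : ℝ) + k) := by
        rw [div_pow, exp_one_pow]; push_cast; ring
    _ ≤ exp 1 * (√2 * √N) * (N ^ (N + k) * exp (k + 1)) / exp ((N : ℝ) + k) := by
        gcongr
        calc ((N : ℝ) + k) ^ (N + k) ≤ N ^ (N + k) * exp (((N + k : ℕ) : ℝ) * k / N) :=
              add_pow_le_pow_mul_exp hN₀ (by positivity) _
          _ ≤ N ^ (N + k) * exp (k + 1) := by gcongr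
    _ = exp 2 * √2 * √N * N ^ (N + k) / exp N := by
        have he : exp 1 * exp (k + 1) * exp N = exp 2 * exp ((N : ℝ) + k) := by
          simp only [← exp_add]; ring_nf
        rw [div_eq_div_iff (by positivity) (by positivity)]
        linear_combination (√2 * √N * N ^ (N + k)) * he

open Nat in
theorem le_poissonMeasure_real_singleton_add {N k : ℕ} (hN : N ≠ 0) (hk : k * k ≤ N) :
    exp (-2) / √2 * (N : ℝ) ^ (-(1 : ℝ) / 2) ≤ Po((N : ℝ≥0)).real {N + k} := by
  have hN₀ : (0 : ℝ) < N := by positivity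
  rw [poissonMeasure_real_singleton, NNReal.coe_natCast, le_div_iff₀ (by positivity),
    neg_div, rpow_neg hN₀.le, ← Real.sqrt_eq_rpow]
  calc exp (-2) / √2 * (√N)⁻¹ * (N + k)!
      ≤ exp (-2) / √2 * (√N)⁻¹ * (exp 2 * √2 * √N * N ^ (N + k) / exp N) := by
        gcongr; exact factorial_add_le_of_mul_self_le hN hk
    _ = exp (-N) * N ^ (N + k) := by
        rw [exp_neg, exp_neg]; field_simp

/-- Lemma 12 of Fournier-Guillin: for `X` Poisson(`N`)-distributed and
`0 ≤ k ≤ ⌊√N⌋`, `P(X = N + k) ≥ e^{-2} 2^{-1/2} N^{-1/2}`. -/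
theorem poisson_mass_lower_bound
    (N : ℕ) (hN : 1 ≤ N)
    (Ω : Type) (_ : MeasurableSpace Ω) (P : Measure Ω)
    (X : Ω → ℕ)
    (hX : Measure.map X P = poissonMeasure (N : ℝ≥0)) :
    ∀ k : ℕ, k ≤ Nat.sqrt N →
      ENNReal.ofReal (Real.exp (-2) / Real.sqrt 2 * (N : ℝ) ^ (-(1 : ℝ) / 2)) ≤
        P {ω | X ω = N + k} := by
  intro k hk
  have hXae : AEMeasurable X P :=
    .of_map_ne_zero (by rw [hX]; exact IsProbabilityMeasure.ne_zero _)
  have hlaw : P {ω | X ω = N + k} = Po((N : ℝ≥0)) {N + k} := by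
    rw [← hX, Measure.map_apply₀ hXae (measurableSet_singleton _).nullMeasurableSet]
    rfl
  rw [hlaw, ← ofReal_measureReal]
  exact ENNReal.ofReal_le_ofReal <| le_poissonMeasure_real_singleton_add (by omega) <|
    (Nat.mul_le_mul hk hk).trans (Nat.sqrt_le N)

end
end

section
/- Let (X_n)_{n≥1} be a stationary sequence of ℝ^d-valued random variables with common law μ which is ρ-mixing for a sequence ρ: ℕ → ℝ⁺, and set μ_N := N^{−1} Σ_{i=1}^N δ_{X_i}. Then for every Borel set A ⊂ ℝ^d and every N ≥ 1, Var(μ_N(A)) ≤ μ(A)(1 − μ(A)) N^{−2} Σ_{i,j=1}^N ρ_{|i−j|}; in particular, if Σ_{k≥0} ρ_k < ∞ then E[|μ_N(A) − μ(A)|] ≤ min{2μ(A), C √(μ(A)/N)} where C depends only on Σ_{k≥0} ρ_k. -/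
open MeasureTheory ProbabilityTheory Real Set ENNReal NNReal

noncomputable section

/-!
Write `μ_N(A) = N⁻¹ ∑ₖ 1_A(X_k)`. Its variance is `N⁻² ∑_{i,j} Cov(1_A(X_i), 1_A(X_j))`, and the
mixing inequality for `f = g = 1_A` bounds each covariance by `ρ_{|i-j|} μ(A)(1 - μ(A))`, since
`Var 1_A = μ(A)(1 - μ(A))`. If `T = ∑ ρ_k < ∞`, each row of `∑_{i,j} ρ_{|i-j|}` is at most `2T`
(`j ↦ |i - j|` is injective on either side of `i`), so `Var μ_N(A) ≤ 2T μ(A)/N`, and Cauchy–Schwarz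
gives `E|μ_N(A) - μ(A)| ≤ √(2T + 1) √(μ(A)/N)`; the `+ 1` only makes the constant positive.
The bound `2μ(A)` is `E|μ_N(A) - μ(A)| ≤ E μ_N(A) + μ(A)`.
-/

/-- The ρ-mixing inequality, with the moments of `f (X i)` and `g (X j)` computed under the
common law `μ`. -/
def IsRhoMixing {E Ω : Type*} [MeasurableSpace E] [MeasurableSpace Ω] (ρ : ℕ → ℝ)
    (X : ℕ → Ω → E) (P : Measure Ω) (μ : Measure E) : Prop :=
  ∀ f g : E → ℝ, MemLp f 2 μ → MemLp g 2 μ → ∀ i j : ℕ,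
    (∫ ω, f (X i ω) * g (X j ω) ∂P) - (∫ y, f y ∂μ) * (∫ y, g y ∂μ) ≤
      ρ (Nat.dist i j) *
        √(((∫ y, f y ^ 2 ∂μ) - (∫ y, f y ∂μ) ^ 2) * ((∫ y, g y ^ 2 ∂μ) - (∫ y, g y ∂μ) ^ 2))

lemma sum_comp_le_tsum_of_injOn {ρ : ℕ → ℝ} (hρ : ∀ n, 0 ≤ ρ n) (hsum : Summable ρ)
    {s : Finset ℕ} {g : ℕ → ℕ} (hg : Set.InjOn g s) :
    ∑ j ∈ s, ρ (g j) ≤ ∑' k, ρ k := by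
  rw [← Finset.sum_image hg]
  exact hsum.sum_le_tsum _ fun k _ => hρ k

lemma sum_sum_dist_le_two_mul_tsum {ρ : ℕ → ℝ} (hρ : ∀ n, 0 ≤ ρ n) (hsum : Summable ρ)
    (N : ℕ) :
    ∑ i ∈ Finset.range N, ∑ j ∈ Finset.range N, ρ (Nat.dist i j) ≤ 2 * N * ∑' k, ρ k := by
  have row (i : ℕ) : ∑ j ∈ Finset.range N, ρ (Nat.dist i j) ≤ 2 * ∑' k, ρ k := by
    rw [← Finset.sum_filter_add_sum_filter_not _ (· ≤ i), two_mul]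
    gcongr <;> refine sum_comp_le_tsum_of_injOn hρ hsum fun x hx y hy h => ?_ <;>
      simp only [Finset.mem_coe, Finset.mem_filter] at hx hy <;>
      simp only [Nat.dist] at h <;> omega
  calc ∑ i ∈ Finset.range N, ∑ j ∈ Finset.range N, ρ (Nat.dist i j)
      ≤ ∑ i ∈ Finset.range N, 2 * ∑' k, ρ k := Finset.sum_le_sum fun i _ => row i
    _ = 2 * N * ∑' k, ρ k := by simp only [Finset.sum_const, Finset.card_range, nsmul_eq_mul]; ring

lemma sq_integral_abs_le_integral_sq {Ω : Type*} [MeasurableSpace Ω] {P : Measure Ω}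
    [IsProbabilityMeasure P] {g : Ω → ℝ} (hg : MemLp g 2 P) :
    (∫ ω, |g ω| ∂P) ^ 2 ≤ ∫ ω, g ω ^ 2 ∂P := by
  have h := variance_nonneg |g| P
  rw [variance_eq_sub hg.abs] at h
  simpa [sq_abs] using h

lemma integral_abs_sub_integral_le_sqrt_variance {Ω : Type*} [MeasurableSpace Ω]
    {P : Measure Ω} [IsProbabilityMeasure P] {Y : Ω → ℝ} (hY : MemLp Y 2 P) :
    ∫ ω, |Y ω - P[Y]| ∂P ≤ √(Var[Y; P]) := by
  rw [variance_eq_integral hY.aemeasurable]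
  exact Real.le_sqrt_of_sq_le (sq_integral_abs_le_integral_sq (hY.sub (memLp_const _)))

section Mixing

variable {E Ω : Type*} [MeasurableSpace E] [MeasurableSpace Ω] {P : Measure Ω}
  {μ : Measure E} {A : Set E}

lemma integral_indicator_one_comp {Y : Ω → E} (hY : Measurable Y) (hmap : P.map Y = μ)
    (hA : MeasurableSet A) : ∫ ω, A.indicator (1 : E → ℝ) (Y ω) ∂P = μ.real A := by
  rw [← integral_map hY.aemeasurable (stronglyMeasurable_one.indicator hA).aestronglyMeasurable,
    hmap, integral_indicator_one hA]

lemma memLp_indicator_one_comp [IsFiniteMeasure P] {Y : Ω → E} (hY : Measurable Y)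
    (hA : MeasurableSet A) (p : ℝ≥0∞) : MemLp (fun ω => A.indicator (1 : E → ℝ) (Y ω)) p P :=
  memLp_indicator_const p (hY hA) (1 : ℝ) (Or.inr (measure_ne_top P _))

lemma IsRhoMixing.covariance_indicator_le [IsProbabilityMeasure P] [IsProbabilityMeasure μ]
    {ρ : ℕ → ℝ} {X : ℕ → Ω → E} (hmix : IsRhoMixing ρ X P μ) (hX : ∀ k, Measurable (X k))
    (hmap : ∀ k, P.map (X k) = μ) (hA : MeasurableSet A) (i j : ℕ) :
    cov[fun ω => A.indicator (1 : E → ℝ) (X i ω), fun ω => A.indicator 1 (X j ω); P] ≤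
      ρ (Nat.dist i j) * (μ.real A * (1 - μ.real A)) := by
  have hsq : (fun y => A.indicator (1 : E → ℝ) y ^ 2) = A.indicator 1 := by
    ext y; rw [sq, ← Pi.mul_apply, ← inter_indicator_one, inter_self]
  have hvar : √((μ.real A - μ.real A ^ 2) * (μ.real A - μ.real A ^ 2)) =
      μ.real A * (1 - μ.real A) := by
    have hm : μ.real A ≤ 1 := measureReal_le_one
    rw [Real.sqrt_mul_self (by nlinarith [measureReal_nonneg (μ := μ) (s := A)])]
    ring
  have hL2 : MemLp (A.indicator (1 : E → ℝ)) 2 μ :=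
    memLp_indicator_const 2 hA 1 (Or.inr (measure_ne_top μ A))
  have h := hmix _ _ hL2 hL2 i j
  rw [hsq, integral_indicator_one hA, hvar] at h
  rw [covariance_eq_sub (memLp_indicator_one_comp (hX i) hA 2)
    (memLp_indicator_one_comp (hX j) hA 2), integral_indicator_one_comp (hX i) (hmap i) hA,
    integral_indicator_one_comp (hX j) (hmap j) hA]
  exact h

end Mixing

lemma empMeas_apply_toReal {d N : ℕ} (x : ℕ → EuclideanSpace ℝ (Fin d))
    {A : Set (EuclideanSpace ℝ (Fin d))} (hA : MeasurableSet A) :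
    (empMeas d N x A).toReal = (N : ℝ)⁻¹ * ∑ k ∈ Finset.range N, A.indicator 1 (x k) := by
  have hdirac (k : ℕ) : Measure.dirac (x k) A = ENNReal.ofReal (A.indicator 1 (x k)) := by
    by_cases h : x k ∈ A <;> simp [Measure.dirac_apply' _ hA, h]
  simp [empMeas, hdirac, ← ENNReal.ofReal_sum_of_nonneg, Finset.sum_nonneg,
    Set.indicator_nonneg]

section EmpiricalMass

variable {d : ℕ} {Ω : Type*} [MeasurableSpace Ω] {P : Measure Ω} [IsProbabilityMeasure P]
  {X : ℕ → Ω → EuclideanSpace ℝ (Fin d)} {μ : Measure (EuclideanSpace ℝ (Fin d))}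
  {A : Set (EuclideanSpace ℝ (Fin d))}

lemma memLp_empMeas_apply (hX : ∀ k, Measurable (X k)) (hA : MeasurableSet A) (N : ℕ)
    (p : ℝ≥0∞) : MemLp (fun ω => (empMeas d N (fun k => X k ω) A).toReal) p P := by
  simp_rw [empMeas_apply_toReal _ hA]
  exact (memLp_finsetSum _ fun k _ => memLp_indicator_one_comp (P := P) (hX k) hA p).const_mul _

lemma integral_empMeas_apply (hX : ∀ k, Measurable (X k)) (hmap : ∀ k, P.map (X k) = μ)
    (hA : MeasurableSet A) {N : ℕ} (hN : 1 ≤ N) :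
    ∫ ω, (empMeas d N (fun k => X k ω) A).toReal ∂P = μ.real A := by
  simp_rw [empMeas_apply_toReal _ hA]
  rw [integral_const_mul, integral_finsetSum _ fun k _ =>
    (memLp_indicator_one_comp (hX k) hA 1).integrable le_rfl]
  simp_rw [integral_indicator_one_comp (hX _) (hmap _) hA]
  have : (N : ℝ) ≠ 0 := by positivity
  simp [this]

lemma integral_abs_empMeas_apply_sub_le (hX : ∀ k, Measurable (X k))
    (hmap : ∀ k, P.map (X k) = μ) (hA : MeasurableSet A) {N : ℕ} (hN : 1 ≤ N) :
    ∫ ω, |(empMeas d N (fun k => X k ω) A).toReal - μ.real A| ∂P ≤ 2 * μ.real A := by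
  have hS := (memLp_empMeas_apply (P := P) hX hA N 1).integrable le_rfl
  calc ∫ ω, |(empMeas d N (fun k => X k ω) A).toReal - μ.real A| ∂P
      ≤ ∫ ω, ((empMeas d N (fun k => X k ω) A).toReal + μ.real A) ∂P := by
        refine integral_mono (hS.sub (integrable_const _)).abs (hS.add (integrable_const _))
          fun ω => abs_sub_le_iff.2 ⟨?_, ?_⟩ <;>
          linarith [measureReal_nonneg (μ := μ) (s := A), ENNReal.toReal_nonneg
            (a := empMeas d N (fun k => X k ω) A)]
    _ = 2 * μ.real A := by
        rw [integral_add hS (integrable_const _), integral_empMeas_apply hX hmap hA hN]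
        simp [two_mul]

variable [IsProbabilityMeasure μ] {ρ : ℕ → ℝ}

lemma IsRhoMixing.variance_empMeas_apply_le (hmix : IsRhoMixing ρ X P μ)
    (hX : ∀ k, Measurable (X k)) (hmap : ∀ k, P.map (X k) = μ) (hA : MeasurableSet A)
    (N : ℕ) :
    Var[fun ω => (empMeas d N (fun k => X k ω) A).toReal; P] ≤
      μ.real A * (1 - μ.real A) * ((N : ℝ) ^ 2)⁻¹ *
        ∑ i ∈ Finset.range N, ∑ j ∈ Finset.range N, ρ (Nat.dist i j) := by
  simp_rw [empMeas_apply_toReal _ hA]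
  rw [variance_const_mul,
    variance_fun_sum' fun k _ => memLp_indicator_one_comp (hX k) hA 2]
  calc ((N : ℝ)⁻¹) ^ 2 * ∑ i ∈ Finset.range N, ∑ j ∈ Finset.range N,
        cov[fun ω => A.indicator 1 (X i ω), fun ω => A.indicator 1 (X j ω); P]
      ≤ ((N : ℝ)⁻¹) ^ 2 * ∑ i ∈ Finset.range N, ∑ j ∈ Finset.range N,
        ρ (Nat.dist i j) * (μ.real A * (1 - μ.real A)) := by
        gcongr with i _ j _
        exact hmix.covariance_indicator_le hX hmap hA i j
    _ = _ := by simp_rw [← Finset.sum_mul]; ring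

lemma IsRhoMixing.variance_empMeas_apply_le_of_summable (hmix : IsRhoMixing ρ X P μ)
    (hρ : ∀ n, 0 ≤ ρ n) (hsum : Summable ρ) (hX : ∀ k, Measurable (X k))
    (hmap : ∀ k, P.map (X k) = μ) (hA : MeasurableSet A) (N : ℕ) :
    Var[fun ω => (empMeas d N (fun k => X k ω) A).toReal; P] ≤
      2 * (∑' k, ρ k) * (μ.real A / N) := by
  have hm0 : 0 ≤ μ.real A := measureReal_nonneg
  have hm1 : μ.real A ≤ 1 := measureReal_le_one
  refine (hmix.variance_empMeas_apply_le hX hmap hA N).trans ?_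
  calc μ.real A * (1 - μ.real A) * ((N : ℝ) ^ 2)⁻¹ *
        ∑ i ∈ Finset.range N, ∑ j ∈ Finset.range N, ρ (Nat.dist i j)
      ≤ μ.real A * 1 * ((N : ℝ) ^ 2)⁻¹ * (2 * N * ∑' k, ρ k) := by
        gcongr
        · exact Finset.sum_nonneg fun i _ => Finset.sum_nonneg fun j _ => hρ _
        · linarith
        · exact sum_sum_dist_le_two_mul_tsum hρ hsum N
    _ = 2 * (∑' k, ρ k) * (μ.real A / N) := by
        rcases N.eq_zero_or_pos with rfl | hN
        · simp
        · field_simp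

end EmpiricalMass

theorem rho_mixing_empirical_variance_bound_general
    (d : ℕ) (ρ : ℕ → ℝ) (hρpos : ∀ n, 0 ≤ ρ n) :
    (∀ (Ω : Type) (_ : MeasurableSpace Ω) (P : Measure Ω), IsProbabilityMeasure P →
      ∀ (X : ℕ → Ω → EuclideanSpace ℝ (Fin d)) (μ : Measure (EuclideanSpace ℝ (Fin d))),
        (∀ k, Measurable (X k)) →
        IsProbabilityMeasure μ →
        (∀ k, Measure.map (X k) P = μ) →
        (∀ (m k : ℕ), Measure.map (fun ω (i : Fin m) => X (i + k) ω) P =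
          Measure.map (fun ω (i : Fin m) => X i ω) P) →
        (∀ f g : EuclideanSpace ℝ (Fin d) → ℝ, MemLp f 2 μ → MemLp g 2 μ →
          ∀ i j : ℕ,
            (∫ ω, f (X i ω) * g (X j ω) ∂P) - (∫ y, f y ∂μ) * (∫ y, g y ∂μ) ≤
              ρ (Nat.dist i j) *
                Real.sqrt (((∫ y, f y ^ 2 ∂μ) - (∫ y, f y ∂μ) ^ 2) *
                  ((∫ y, g y ^ 2 ∂μ) - (∫ y, g y ∂μ) ^ 2))) →
      ∀ A : Set (EuclideanSpace ℝ (Fin d)), MeasurableSet A → ∀ N : ℕ, 1 ≤ N →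
        ∫ ω, (((empMeas d N fun k => X k ω) A).toReal -
            ∫ ω', ((empMeas d N fun k => X k ω') A).toReal ∂P) ^ 2 ∂P ≤
          (μ A).toReal * (1 - (μ A).toReal) * ((N : ℝ) ^ 2)⁻¹ *
            ∑ i ∈ Finset.range N, ∑ j ∈ Finset.range N, ρ (Nat.dist i j)) ∧
    (Summable ρ →
      ∃ C : ℝ, 0 < C ∧
      ∀ (Ω : Type) (_ : MeasurableSpace Ω) (P : Measure Ω), IsProbabilityMeasure P →
      ∀ (X : ℕ → Ω → EuclideanSpace ℝ (Fin d)) (μ : Measure (EuclideanSpace ℝ (Fin d))),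
        (∀ k, Measurable (X k)) →
        IsProbabilityMeasure μ →
        (∀ k, Measure.map (X k) P = μ) →
        (∀ (m k : ℕ), Measure.map (fun ω (i : Fin m) => X (i + k) ω) P =
          Measure.map (fun ω (i : Fin m) => X i ω) P) →
        (∀ f g : EuclideanSpace ℝ (Fin d) → ℝ, MemLp f 2 μ → MemLp g 2 μ →
          ∀ i j : ℕ,
            (∫ ω, f (X i ω) * g (X j ω) ∂P) - (∫ y, f y ∂μ) * (∫ y, g y ∂μ) ≤
              ρ (Nat.dist i j) *
                Real.sqrt (((∫ y, f y ^ 2 ∂μ) - (∫ y, f y ∂μ) ^ 2) *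
                  ((∫ y, g y ^ 2 ∂μ) - (∫ y, g y ∂μ) ^ 2))) →
      ∀ A : Set (EuclideanSpace ℝ (Fin d)), MeasurableSet A → ∀ N : ℕ, 1 ≤ N →
        ∫ ω, |((empMeas d N fun k => X k ω) A).toReal - (μ A).toReal| ∂P ≤
          min (2 * (μ A).toReal) (C * Real.sqrt ((μ A).toReal / N))) := by
  refine ⟨fun Ω _ P _ X μ hX _ hmap _ hmix A hA N _ => ?_, fun hsum => ?_⟩
  · rw [← variance_eq_integral (memLp_empMeas_apply hX hA N 2).aemeasurable]
    exact IsRhoMixing.variance_empMeas_apply_le hmix hX hmap hA N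
  have hT : 0 ≤ ∑' k, ρ k := tsum_nonneg hρpos
  refine ⟨√(2 * ∑' k, ρ k + 1), Real.sqrt_pos.2 (by linarith),
    fun Ω _ P _ X μ hX _ hmap _ hmix A hA N hN =>
      le_min (integral_abs_empMeas_apply_sub_le hX hmap hA hN) ?_⟩
  have hS := memLp_empMeas_apply (P := P) hX hA N 2
  calc ∫ ω, |(empMeas d N (fun k => X k ω) A).toReal - μ.real A| ∂P
      ≤ √(Var[fun ω => (empMeas d N (fun k => X k ω) A).toReal; P]) := by
        simpa only [integral_empMeas_apply hX hmap hA hN] using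
          integral_abs_sub_integral_le_sqrt_variance hS
    _ ≤ √((2 * ∑' k, ρ k + 1) * (μ.real A / N)) := by
        refine Real.sqrt_le_sqrt ((IsRhoMixing.variance_empMeas_apply_le_of_summable hmix
          hρpos hsum hX hmap hA N).trans ?_)
        gcongr
        linarith
    _ = √(2 * ∑' k, ρ k + 1) * √(μ.real A / N) := Real.sqrt_mul (by linarith) _

/-- Key estimate in the proof of Theorem 15 of Fournier-Guillin: variance bound for
`μ_N(A)` for a stationary `ρ`-mixing sequence, and the resulting `L¹` bound when the
mixing coefficients are summable. -/
theorem rho_mixing_empirical_variance_bound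
    (d : ℕ) (hd : 1 ≤ d)
    (ρ : ℕ → ℝ) (hρpos : ∀ n, 0 ≤ ρ n) (hρlim : Filter.Tendsto ρ Filter.atTop (nhds 0)) :
    (∀ (Ω : Type) (_ : MeasurableSpace Ω) (P : Measure Ω), IsProbabilityMeasure P →
      ∀ (X : ℕ → Ω → EuclideanSpace ℝ (Fin d)) (μ : Measure (EuclideanSpace ℝ (Fin d))),
        (∀ k, Measurable (X k)) →
        IsProbabilityMeasure μ →
        (∀ k, Measure.map (X k) P = μ) →
        (∀ (m k : ℕ), Measure.map (fun ω (i : Fin m) => X (i + k) ω) P =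
          Measure.map (fun ω (i : Fin m) => X i ω) P) →
        (∀ f g : EuclideanSpace ℝ (Fin d) → ℝ, MemLp f 2 μ → MemLp g 2 μ →
          ∀ i j : ℕ,
            (∫ ω, f (X i ω) * g (X j ω) ∂P) - (∫ y, f y ∂μ) * (∫ y, g y ∂μ) ≤
              ρ (Nat.dist i j) *
                Real.sqrt (((∫ y, f y ^ 2 ∂μ) - (∫ y, f y ∂μ) ^ 2) *
                  ((∫ y, g y ^ 2 ∂μ) - (∫ y, g y ∂μ) ^ 2))) →
      ∀ A : Set (EuclideanSpace ℝ (Fin d)), MeasurableSet A → ∀ N : ℕ, 1 ≤ N →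
        ∫ ω, (((empMeas d N fun k => X k ω) A).toReal -
            ∫ ω', ((empMeas d N fun k => X k ω') A).toReal ∂P) ^ 2 ∂P ≤
          (μ A).toReal * (1 - (μ A).toReal) * ((N : ℝ) ^ 2)⁻¹ *
            ∑ i ∈ Finset.range N, ∑ j ∈ Finset.range N, ρ (Nat.dist i j)) ∧
    (Summable ρ →
      ∃ C : ℝ, 0 < C ∧
      ∀ (Ω : Type) (_ : MeasurableSpace Ω) (P : Measure Ω), IsProbabilityMeasure P →
      ∀ (X : ℕ → Ω → EuclideanSpace ℝ (Fin d)) (μ : Measure (EuclideanSpace ℝ (Fin d))),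
        (∀ k, Measurable (X k)) →
        IsProbabilityMeasure μ →
        (∀ k, Measure.map (X k) P = μ) →
        (∀ (m k : ℕ), Measure.map (fun ω (i : Fin m) => X (i + k) ω) P =
          Measure.map (fun ω (i : Fin m) => X i ω) P) →
        (∀ f g : EuclideanSpace ℝ (Fin d) → ℝ, MemLp f 2 μ → MemLp g 2 μ →
          ∀ i j : ℕ,
            (∫ ω, f (X i ω) * g (X j ω) ∂P) - (∫ y, f y ∂μ) * (∫ y, g y ∂μ) ≤
              ρ (Nat.dist i j) *
                Real.sqrt (((∫ y, f y ^ 2 ∂μ) - (∫ y, f y ∂μ) ^ 2) *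
                  ((∫ y, g y ^ 2 ∂μ) - (∫ y, g y ∂μ) ^ 2))) →
      ∀ A : Set (EuclideanSpace ℝ (Fin d)), MeasurableSet A → ∀ N : ℕ, 1 ≤ N →
        ∫ ω, |((empMeas d N fun k => X k ω) A).toReal - (μ A).toReal| ∂P ≤
          min (2 * (μ A).toReal) (C * Real.sqrt ((μ A).toReal / N))) :=
  rho_mixing_empirical_variance_bound_general d ρ hρpos

end
end

section
/- Let r > 2 and let (X_n)_{n≥0} be an ℝ^d-valued Markov chain with transition kernel P, initial distribution ν and invariant probability measure π, satisfying ‖P^n f − π(f)‖_{L²(π)} ≤ C₀ ρ_n ‖f − π(f)‖_{L²(π)} for all n ≥ 1 and f ∈ L²(π), with Σ_{n≥1} ρ_n < ∞, and with ν absolutely continuous with respect to π and ‖dν/dπ‖_{L^r(π)} < ∞. Set μ_N := N^{−1} Σ_{n=1}^N δ_{X_n}. Then there is a constant C (depending on C₀, Σρ_n, r, ‖dν/dπ‖_{L^r(π)}) such that for every Borel set A ⊂ ℝ^d and every N ≥ 1, E_ν[|μ_N(A) − π(A)|] ≤ C (π(A))^{(r−1)/(2r)} N^{−1/2}. -/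
open MeasureTheory ProbabilityTheory Real Set ENNReal NNReal

noncomputable section

/-- `n`-step transition kernel. -/
def kiter (d : ℕ)
    (K : ProbabilityTheory.Kernel (EuclideanSpace ℝ (Fin d)) (EuclideanSpace ℝ (Fin d))) :
    ℕ → ProbabilityTheory.Kernel (EuclideanSpace ℝ (Fin d)) (EuclideanSpace ℝ (Fin d))
  | 0 => ProbabilityTheory.Kernel.id
  | n + 1 => K ∘ₖ kiter d K n

/-!
Write `φ = 1_A - π(A)` and `Pⁿφ(x) = ∫ φ dPⁿ(x, ·)`. By the Markov property,
`E_ν[φ(X_m) φ(X_{m+k})] = ∫ Pᵐ(φ · Pᵏφ) dν`. Hölder's inequality against `dν/dπ ∈ Lʳ(π)` and the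
contraction of `Pᵐ` on `L^q(π)`, `1/r + 1/q = 1` (Jensen plus invariance of `π`), bound this by
`‖dν/dπ‖_r ‖φ · Pᵏφ‖_q`. A second Hölder inequality with `1/q = 1/s + 1/2` and the `L²` decay give
`‖φ‖_s ‖Pᵏφ‖_2 ≤ 2 π(A)^{1/s} · 2 C₀ρ_k π(A)^{1/2} = 4 C₀ρ_k π(A)^{(r-1)/r}`. Summing over pairs of
times, `E_ν[(∑_{j ≤ N} φ(X_j))²] ≲ N π(A)^{(r-1)/r} (1 + C₀ ∑ ρ_k)`, and Cauchy–Schwarz concludes.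
-/

theorem Function.update_nonneg {ι : Type*} [DecidableEq ι] {f : ι → ℝ} (hf : ∀ i, 0 ≤ f i)
    (i : ι) {a : ℝ} (ha : 0 ≤ a) (j : ι) : 0 ≤ Function.update f i a j := by
  rcases eq_or_ne j i with rfl | hj
  · simpa using ha
  · simpa [hj] using hf j

section LpBounds

variable {α β : Type*} [MeasurableSpace α] [MeasurableSpace β]

theorem enorm_integral_rpow_le_lintegral {μ : Measure α} [IsProbabilityMeasure μ] {g : α → ℝ}
    (hg : AEStronglyMeasurable g μ) {p : ℝ≥0∞} (hp1 : 1 ≤ p) (hp : p ≠ ∞) :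
    ‖∫ y, g y ∂μ‖ₑ ^ p.toReal ≤ ∫⁻ y, ‖g y‖ₑ ^ p.toReal ∂μ := by
  have hp0 : 0 < p.toReal := ENNReal.toReal_pos (by positivity) hp
  have h : ‖∫ y, g y ∂μ‖ₑ ≤ eLpNorm g p μ :=
    calc ‖∫ y, g y ∂μ‖ₑ ≤ ∫⁻ y, ‖g y‖ₑ ∂μ := enorm_integral_le_lintegral_enorm g
      _ = eLpNorm g 1 μ := eLpNorm_one_eq_lintegral_enorm.symm
      _ ≤ eLpNorm g p μ := eLpNorm_le_eLpNorm_of_exponent_le hp1 hg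
  rw [eLpNorm_eq_lintegral_rpow_enorm_toReal (by positivity) hp] at h
  calc ‖∫ y, g y ∂μ‖ₑ ^ p.toReal
      ≤ ((∫⁻ y, ‖g y‖ₑ ^ p.toReal ∂μ) ^ (1 / p.toReal)) ^ p.toReal :=
        ENNReal.rpow_le_rpow h hp0.le
    _ = ∫⁻ y, ‖g y‖ₑ ^ p.toReal ∂μ := by
        rw [← ENNReal.rpow_mul, one_div_mul_cancel hp0.ne', ENNReal.rpow_one]

theorem eLpNorm_integral_kernel_le (κ : Kernel α β) [IsMarkovKernel κ] (μ : Measure α)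
    {g : β → ℝ} (hg : Measurable g) {p : ℝ≥0∞} (hp1 : 1 ≤ p) (hp : p ≠ ∞) :
    eLpNorm (fun x => ∫ y, g y ∂κ x) p μ ≤ eLpNorm g p (μ.bind (fun x => κ x)) := by
  have hp0 : p ≠ 0 := by positivity
  rw [eLpNorm_eq_lintegral_rpow_enorm_toReal hp0 hp,
    eLpNorm_eq_lintegral_rpow_enorm_toReal hp0 hp,
    Measure.lintegral_bind κ.measurable.aemeasurable
      (hg.enorm.pow_const _).aemeasurable]
  gcongr with x
  exact enorm_integral_rpow_le_lintegral hg.aestronglyMeasurable hp1 hp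

theorem enorm_integral_le_eLpNorm_rnDeriv_mul {ν μ : Measure α} [SigmaFinite ν] [SigmaFinite μ]
    (hν : ν ≪ μ) {p q : ℝ≥0∞} [p.HolderConjugate q] {G : α → ℝ} (hG : AEStronglyMeasurable G μ) :
    ‖∫ x, G x ∂ν‖ₑ ≤ eLpNorm (fun x => (ν.rnDeriv μ x).toReal) p μ * eLpNorm G q μ := by
  rw [← integral_rnDeriv_smul hν]
  calc ‖∫ x, (ν.rnDeriv μ x).toReal • G x ∂μ‖ₑ
      ≤ eLpNorm (fun x => (ν.rnDeriv μ x).toReal • G x) 1 μ := by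
        rw [eLpNorm_one_eq_lintegral_enorm]
        exact enorm_integral_le_lintegral_enorm _
    _ ≤ _ := eLpNorm_smul_le_mul_eLpNorm (p := p) (q := q) (r := 1) hG
        (φ := fun x => (ν.rnDeriv μ x).toReal)
        (Measure.measurable_rnDeriv ν μ).ennreal_toReal.aestronglyMeasurable

theorem eLpNorm_indicator_one_sub_le {μ : Measure α} [IsProbabilityMeasure μ] {A : Set α}
    (hA : MeasurableSet A) {p : ℝ≥0∞} (hp1 : 1 ≤ p) (hp : p ≠ ∞) :
    eLpNorm (fun x => A.indicator 1 x - μ.real A) p μ ≤ 2 * μ A ^ p.toReal⁻¹ := by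
  have hp0 : p ≠ 0 := by positivity
  have hexp : p.toReal⁻¹ ≤ 1 := inv_le_one_of_one_le₀ (by
    simpa using ENNReal.toReal_mono hp hp1)
  calc eLpNorm (fun x => A.indicator 1 x - μ.real A) p μ
      ≤ eLpNorm (A.indicator 1) p μ + eLpNorm (fun _ => μ.real A) p μ :=
        eLpNorm_sub_le (measurable_const.indicator hA).aestronglyMeasurable
          aestronglyMeasurable_const hp1
    _ = μ A ^ p.toReal⁻¹ + μ A := by
        rw [show (1 : α → ℝ) = fun _ => 1 from rfl, eLpNorm_indicator_const hA hp0 hp,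
          eLpNorm_const _ hp0 (NeZero.ne μ)]
        simp [Real.enorm_eq_ofReal_abs, measureReal_def]
    _ ≤ μ A ^ p.toReal⁻¹ + μ A ^ p.toReal⁻¹ := by
        gcongr
        simpa using ENNReal.rpow_le_rpow_of_exponent_ge prob_le_one hexp
    _ = 2 * μ A ^ p.toReal⁻¹ := (two_mul _).symm

theorem norm_integral_kernel_le (κ : Kernel α β) [IsMarkovKernel κ] {g : β → ℝ} {C : ℝ}
    (hgb : ∀ y, ‖g y‖ ≤ C) (x : α) : ‖∫ y, g y ∂κ x‖ ≤ C := by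
  simpa using norm_integral_le_of_norm_le_const (μ := κ x) (ae_of_all _ hgb)

theorem norm_indicator_one_sub_measureReal_le_one (μ : Measure α) [IsProbabilityMeasure μ]
    (A : Set α) (x : α) : ‖A.indicator (1 : α → ℝ) x - μ.real A‖ ≤ 1 := by
  have h0 : 0 ≤ μ.real A := measureReal_nonneg
  have h1 : μ.real A ≤ 1 := measureReal_le_one
  rw [Real.norm_eq_abs, abs_le]
  by_cases hx : x ∈ A
  · simp only [Set.indicator_of_mem hx, Pi.one_apply]; constructor <;> linarith
  · simp only [Set.indicator_of_notMem hx]; constructor <;> linarith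

end LpBounds

theorem sum_dist_le_two_mul_tsum {c : ℕ → ℝ} (hc0 : ∀ n, 0 ≤ c n) (hc : Summable c)
    (s : Finset ℕ) (j : ℕ) : ∑ l ∈ s, c (Nat.dist j l) ≤ 2 * ∑' n, c n := by
  have hinj : ∀ t : Finset ℕ, Set.InjOn (Nat.dist j) t → ∑ l ∈ t, c (Nat.dist j l) ≤ ∑' n, c n :=
    fun t ht => by
      rw [← Finset.sum_image ht]
      exact hc.sum_le_tsum _ fun n _ => hc0 n
  rw [← Finset.sum_filter_add_sum_filter_not s (· ≤ j), two_mul]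
  gcongr <;> refine hinj _ fun l hl l' hl' h => ?_ <;>
    simp only [Finset.mem_coe, Finset.mem_filter] at hl hl' <;>
    simp only [Nat.dist] at h <;> omega

section Covariance

variable {Ω : Type*} [MeasurableSpace Ω] {P : Measure Ω} [IsProbabilityMeasure P]

theorem integral_abs_le_sqrt_integral_sq {S : Ω → ℝ} (hS : MemLp S 2 P) :
    ∫ ω, |S ω| ∂P ≤ √(∫ ω, S ω ^ 2 ∂P) := by
  have h := variance_nonneg (fun ω => |S ω|) P
  rw [variance_eq_sub (X := fun ω => |S ω|) hS.abs] at h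
  simp only [Pi.pow_apply, sq_abs] at h
  exact Real.le_sqrt_of_sq_le (by linarith)

theorem integral_abs_sum_le_of_abs_integral_mul_add_le {Y : ℕ → Ω → ℝ}
    (hY : ∀ j, MemLp (Y j) 2 P) {c : ℕ → ℝ} (hc0 : ∀ n, 0 ≤ c n) (hc : Summable c)
    (hcov : ∀ m k, |∫ ω, Y m ω * Y (m + k) ω ∂P| ≤ c k) (N : ℕ) :
    ∫ ω, |∑ j ∈ Finset.range N, Y j ω| ∂P ≤ √(2 * N * ∑' n, c n) := by
  have hcov' : ∀ j l, |∫ ω, Y j ω * Y l ω ∂P| ≤ c (Nat.dist j l) := fun j l => by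
    rcases le_total j l with hjl | hlj
    · simpa [Nat.dist_eq_sub_of_le hjl, Nat.add_sub_cancel' hjl] using hcov j (l - j)
    · simpa [Nat.dist_eq_sub_of_le_right hlj, Nat.add_sub_cancel' hlj, mul_comm]
        using hcov l (j - l)
  refine (integral_abs_le_sqrt_integral_sq (memLp_finsetSum _ fun j _ => hY j)).trans
    (Real.sqrt_le_sqrt ?_)
  have hint : ∀ j l, Integrable (fun ω => Y j ω * Y l ω) P := fun j l =>
    (hY j).integrable_mul (hY l)
  simp_rw [sq, Finset.sum_mul_sum]
  rw [integral_finsetSum _ fun j _ => integrable_finsetSum _ fun l _ => hint j l]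
  calc ∑ j ∈ Finset.range N, ∫ ω, ∑ l ∈ Finset.range N, Y j ω * Y l ω ∂P
      = ∑ j ∈ Finset.range N, ∑ l ∈ Finset.range N, ∫ ω, Y j ω * Y l ω ∂P := by
        simp_rw [integral_finsetSum _ fun l _ => hint _ l]
    _ ≤ ∑ j ∈ Finset.range N, ∑ l ∈ Finset.range N, c (Nat.dist j l) := by
        gcongr with j _ l _
        exact (le_abs_self _).trans (hcov' j l)
    _ ≤ ∑ j ∈ Finset.range N, 2 * ∑' n, c n := by
        gcongr with j _
        exact sum_dist_le_two_mul_tsum hc0 hc _ j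
    _ = 2 * N * ∑' n, c n := by
        rw [Finset.sum_const, Finset.card_range, nsmul_eq_mul]; ring

theorem integral_abs_average_le_of_abs_integral_mul_add_le {Y : ℕ → Ω → ℝ}
    (hY : ∀ j, MemLp (Y j) 2 P) {c : ℕ → ℝ} (hc0 : ∀ n, 0 ≤ c n) (hc : Summable c)
    (hcov : ∀ m k, |∫ ω, Y m ω * Y (m + k) ω ∂P| ≤ c k) (N : ℕ) :
    ∫ ω, |(N : ℝ)⁻¹ * ∑ j ∈ Finset.range N, Y j ω| ∂P ≤
      √(2 * ∑' n, c n) * (N : ℝ) ^ (-(1 : ℝ) / 2) := by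
  rcases Nat.eq_zero_or_pos N with rfl | hN
  · simp
  have hN' : (0 : ℝ) < N := Nat.cast_pos.mpr hN
  simp_rw [abs_mul, abs_inv, Nat.abs_cast, integral_const_mul]
  calc (N : ℝ)⁻¹ * ∫ ω, |∑ j ∈ Finset.range N, Y j ω| ∂P
      ≤ (N : ℝ)⁻¹ * √(2 * N * ∑' n, c n) := by
        gcongr
        exact integral_abs_sum_le_of_abs_integral_mul_add_le hY hc0 hc hcov N
    _ = √(2 * ∑' n, c n) * (N : ℝ) ^ (-(1 : ℝ) / 2) := by
        rw [mul_right_comm, Real.sqrt_mul (mul_nonneg zero_le_two (tsum_nonneg hc0)),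
          Real.sqrt_eq_rpow (N : ℝ), mul_left_comm, ← Real.rpow_neg_one, ← Real.rpow_add hN']
        norm_num

end Covariance

theorem empMeas_apply_toReal_sub (d : ℕ) {N : ℕ} (hN : N ≠ 0) (x : ℕ → EuclideanSpace ℝ (Fin d))
    {A : Set (EuclideanSpace ℝ (Fin d))} (hA : MeasurableSet A) (a : ℝ) :
    (empMeas d N x A).toReal - a = (N : ℝ)⁻¹ * ∑ k ∈ Finset.range N, (A.indicator 1 (x k) - a) := by
  have hN' : (N : ℝ) ≠ 0 := Nat.cast_ne_zero.mpr hN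
  simp only [empMeas, Measure.smul_apply, Measure.finsetSum_apply, Measure.dirac_apply' _ hA,
    smul_eq_mul, ENNReal.toReal_mul, ENNReal.toReal_inv, ENNReal.toReal_natCast,
    Finset.sum_sub_distrib, Finset.sum_const, Finset.card_range, nsmul_eq_mul, mul_sub,
    inv_mul_cancel_left₀ hN']
  rw [ENNReal.toReal_sum fun k _ => by by_cases hk : x k ∈ A <;> simp [hk]]
  congr 2
  refine Finset.sum_congr rfl fun k _ => ?_
  by_cases hk : x k ∈ A <;> simp [hk]

section MarkovChain

variable {E Ω : Type*} [MeasurableSpace E] [MeasurableSpace Ω]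

def HasMarkovTransition (K : Kernel E E) (X : ℕ → Ω → E) (P : Measure Ω) : Prop :=
  ∀ n : ℕ, Measure.map (fun ω => ((fun i : Fin (n + 1) => X i ω), X (n + 1) ω)) P =
    (Measure.map (fun ω (i : Fin (n + 1)) => X i ω) P) ⊗ₘ
      (K.comap (fun v : Fin (n + 1) → E => v (Fin.last n)) (measurable_pi_apply _))

variable {K : Kernel E E} [IsMarkovKernel K] {X : ℕ → Ω → E} {P : Measure Ω}
  [IsProbabilityMeasure P] {f g : E → ℝ} {Cf Cg : ℝ}

theorem HasMarkovTransition.integral_mul_comp_succ (hM : HasMarkovTransition K X P)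
    (hX : ∀ n, Measurable (X n)) {m n : ℕ} (hmn : m ≤ n)
    (hf : Measurable f) (hfb : ∀ x, ‖f x‖ ≤ Cf) (hg : Measurable g) (hgb : ∀ x, ‖g x‖ ≤ Cg) :
    ∫ ω, f (X m ω) * g (X (n + 1) ω) ∂P = ∫ ω, f (X m ω) * ∫ y, g y ∂K (X n ω) ∂P := by
  have hpast : Measurable fun ω (i : Fin (n + 1)) => X i ω := measurable_pi_lambda _ (hX ·)
  have hF : Measurable fun v : (Fin (n + 1) → E) × E => f (v.1 ⟨m, by omega⟩) * g v.2 := by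
    fun_prop
  have hF_int : Integrable (fun v : (Fin (n + 1) → E) × E => f (v.1 ⟨m, by omega⟩) * g v.2)
      ((P.map fun ω (i : Fin (n + 1)) => X i ω) ⊗ₘ
        (K.comap (fun v : Fin (n + 1) → E => v (Fin.last n)) (measurable_pi_apply _))) :=
    ((Integrable.of_bound (hg.comp measurable_snd).aestronglyMeasurable Cg
      (ae_of_all _ fun v => hgb v.2))).bdd_mul
      (hf.comp ((measurable_pi_apply _).comp measurable_fst)).aestronglyMeasurable
      (ae_of_all _ fun v => hfb _)
  calc ∫ ω, f (X m ω) * g (X (n + 1) ω) ∂P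
      = ∫ v, f (v.1 ⟨m, by omega⟩) * g v.2
          ∂(P.map fun ω => ((fun i : Fin (n + 1) => X i ω), X (n + 1) ω)) :=
        (integral_map (hpast.prodMk (hX _)).aemeasurable hF.aestronglyMeasurable).symm
    _ = ∫ v : Fin (n + 1) → E, f (v ⟨m, by omega⟩) * ∫ y, g y ∂K (v (Fin.last n))
          ∂(P.map fun ω (i : Fin (n + 1)) => X i ω) := by
        rw [hM n, Measure.integral_compProd hF_int]
        simp only [Kernel.comap_apply, integral_const_mul]
    _ = ∫ ω, f (X m ω) * ∫ y, g y ∂K (X n ω) ∂P := by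
        rw [integral_map hpast.aemeasurable]
        · rfl
        · exact ((hf.comp (measurable_pi_apply _)).mul
            ((hg.stronglyMeasurable.integral_kernel (κ := K)).measurable.comp
              (measurable_pi_apply _))).aestronglyMeasurable

end MarkovChain

section IteratedKernel

variable {d : ℕ} {K : Kernel (EuclideanSpace ℝ (Fin d)) (EuclideanSpace ℝ (Fin d))}

instance isMarkovKernel_kiter [IsMarkovKernel K] (n : ℕ) : IsMarkovKernel (kiter d K n) := by
  induction n with
  | zero => dsimp only [kiter]; infer_instance
  | succ n ih => dsimp only [kiter]; infer_instance

theorem integral_kiter_zero (g : EuclideanSpace ℝ (Fin d) → ℝ) (x : EuclideanSpace ℝ (Fin d)) :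
    ∫ y, g y ∂kiter d K 0 x = g x := by
  simp [kiter, Kernel.id_apply]

theorem integral_kiter_succ [IsMarkovKernel K] {g : EuclideanSpace ℝ (Fin d) → ℝ}
    (hg : Measurable g) {C : ℝ} (hgb : ∀ y, ‖g y‖ ≤ C) (n : ℕ) (x : EuclideanSpace ℝ (Fin d)) :
    ∫ y, g y ∂kiter d K (n + 1) x = ∫ z, ∫ y, g y ∂K z ∂kiter d K n x :=
  Kernel.integral_comp (Integrable.of_bound hg.aestronglyMeasurable C (ae_of_all _ hgb))

theorem bind_kiter_eq_self {μ : Measure (EuclideanSpace ℝ (Fin d))}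
    (hμ : μ.bind (fun x => K x) = μ) (n : ℕ) : μ.bind (fun x => kiter d K n x) = μ := by
  induction n with
  | zero => simp [kiter, Kernel.id_apply, Measure.bind_dirac]
  | succ n ih =>
    simp_rw [kiter, Kernel.comp_apply]
    rw [← Measure.bind_bind (kiter d K n).measurable.aemeasurable K.measurable.aemeasurable, ih,
      hμ]

def HasL2Decay (K : Kernel (EuclideanSpace ℝ (Fin d)) (EuclideanSpace ℝ (Fin d)))
    (μ : Measure (EuclideanSpace ℝ (Fin d))) (γ : ℕ → ℝ) : Prop :=
  ∀ n : ℕ, 1 ≤ n → ∀ f : EuclideanSpace ℝ (Fin d) → ℝ, MemLp f 2 μ →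
    eLpNorm (fun x => (∫ y, f y ∂(kiter d K n x)) - ∫ y, f y ∂μ) 2 μ ≤
      ENNReal.ofReal (γ n) * eLpNorm (fun x => f x - ∫ y, f y ∂μ) 2 μ

theorem HasL2Decay.eLpNorm_integral_kiter_indicator_sub_le [IsMarkovKernel K]
    {μ : Measure (EuclideanSpace ℝ (Fin d))} [IsProbabilityMeasure μ] {γ : ℕ → ℝ}
    (hK : HasL2Decay K μ γ) {A : Set (EuclideanSpace ℝ (Fin d))} (hA : MeasurableSet A) (k : ℕ) :
    eLpNorm (fun x => ∫ y, A.indicator 1 y - μ.real A ∂kiter d K k x) 2 μ ≤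
      ENNReal.ofReal (Function.update γ 0 1 k) *
        eLpNorm (fun x => A.indicator 1 x - μ.real A) 2 μ := by
  rcases Nat.eq_zero_or_pos k with rfl | hk
  · simp [integral_kiter_zero]
  have hχ : ∀ ν : Measure (EuclideanSpace ℝ (Fin d)), [IsFiniteMeasure ν] →
      Integrable (A.indicator 1) ν := fun ν _ => (integrable_const (1 : ℝ)).indicator hA
  have h := hK k hk (A.indicator 1) (memLp_indicator_const 2 hA (1 : ℝ) (.inr (measure_ne_top _ _)))
  rw [integral_indicator_one hA] at h
  simpa [hk.ne', integral_sub (hχ _) (integrable_const _)] using h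

variable {Ω : Type*} [MeasurableSpace Ω] [IsMarkovKernel K]
  {X : ℕ → Ω → EuclideanSpace ℝ (Fin d)} {P : Measure Ω} [IsProbabilityMeasure P]
  {f g : EuclideanSpace ℝ (Fin d) → ℝ} {Cf Cg : ℝ}

theorem HasMarkovTransition.integral_mul_comp_add (hM : HasMarkovTransition K X P)
    (hX : ∀ n, Measurable (X n)) (hf : Measurable f) (hfb : ∀ x, ‖f x‖ ≤ Cf)
    (hg : Measurable g) (hgb : ∀ x, ‖g x‖ ≤ Cg) (m k : ℕ) :
    ∫ ω, f (X m ω) * g (X (m + k) ω) ∂P = ∫ ω, f (X m ω) * ∫ y, g y ∂kiter d K k (X m ω) ∂P := by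
  induction k generalizing g with
  | zero => simp [integral_kiter_zero]
  | succ k ih =>
    have hKg : Measurable fun z => ∫ y, g y ∂K z :=
      (hg.stronglyMeasurable.integral_kernel (κ := K)).measurable
    rw [← add_assoc, hM.integral_mul_comp_succ hX (by omega) hf hfb hg hgb,
      ih hKg (norm_integral_kernel_le K hgb)]
    simp_rw [integral_kiter_succ hg hgb]

theorem HasMarkovTransition.integral_comp (hM : HasMarkovTransition K X P)
    (hX : ∀ n, Measurable (X n)) (hg : Measurable g) (hgb : ∀ x, ‖g x‖ ≤ Cg) (m : ℕ) :
    ∫ ω, g (X m ω) ∂P = ∫ x, ∫ y, g y ∂kiter d K m x ∂(P.map (X 0)) := by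
  have h := hM.integral_mul_comp_add hX measurable_const (fun _ => norm_one.le) hg hgb 0 m
  simp only [one_mul, zero_add] at h
  rw [h, integral_map (hX 0).aemeasurable]
  exact (hg.stronglyMeasurable.integral_kernel (κ := kiter d K m)).aestronglyMeasurable

variable {ν μ : Measure (EuclideanSpace ℝ (Fin d))} [SigmaFinite ν] [IsProbabilityMeasure μ]

theorem HasMarkovTransition.enorm_integral_mul_comp_add_le (hM : HasMarkovTransition K X P)
    (hX : ∀ n, Measurable (X n)) (hX0 : P.map (X 0) = ν) (hνμ : ν ≪ μ)
    (hμ : μ.bind (fun x => K x) = μ) {p q : ℝ≥0∞} [p.HolderConjugate q] (hq : q ≠ ∞)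
    (hf : Measurable f) (hfb : ∀ x, ‖f x‖ ≤ Cf) (hg : Measurable g) (hgb : ∀ x, ‖g x‖ ≤ Cg)
    (m k : ℕ) :
    ‖∫ ω, f (X m ω) * g (X (m + k) ω) ∂P‖ₑ ≤
      eLpNorm (fun x => (ν.rnDeriv μ x).toReal) p μ *
        eLpNorm (fun x => f x * ∫ y, g y ∂kiter d K k x) q μ := by
  have hPg : Measurable fun x => ∫ y, g y ∂kiter d K k x :=
    (hg.stronglyMeasurable.integral_kernel (κ := kiter d K k)).measurable
  have hfPg : ∀ x, ‖f x * ∫ y, g y ∂kiter d K k x‖ ≤ Cf * Cg := fun x => by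
    rw [norm_mul]
    exact mul_le_mul (hfb x) (norm_integral_kernel_le _ hgb x) (norm_nonneg _)
      ((norm_nonneg _).trans (hfb x))
  rw [hM.integral_mul_comp_add hX hf hfb hg hgb,
    hM.integral_comp (g := fun x => f x * ∫ y, g y ∂kiter d K k x) hX (hf.mul hPg) hfPg, hX0]
  refine (enorm_integral_le_eLpNorm_rnDeriv_mul (p := p) (q := q) hνμ ?_).trans ?_
  · exact ((hf.mul hPg).stronglyMeasurable.integral_kernel (κ := kiter d K m)).aestronglyMeasurable
  gcongr
  simpa only [bind_kiter_eq_self hμ m] using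
    eLpNorm_integral_kernel_le (kiter d K m) μ (g := fun x => f x * ∫ y, g y ∂kiter d K k x)
      (hf.mul hPg) (ENNReal.HolderConjugate.one_le q p) hq

theorem HasMarkovTransition.enorm_integral_indicator_sub_mul_le (hM : HasMarkovTransition K X P)
    (hX : ∀ n, Measurable (X n)) (hX0 : P.map (X 0) = ν) (hνμ : ν ≪ μ)
    (hμ : μ.bind (fun x => K x) = μ) {γ : ℕ → ℝ} (hK : HasL2Decay K μ γ) {p q s : ℝ≥0∞}
    [p.HolderConjugate q] [s.HolderTriple 2 q] (hq : q ≠ ∞) (hs : s ≠ ∞)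
    {A : Set (EuclideanSpace ℝ (Fin d))} (hA : MeasurableSet A) (m k : ℕ) :
    ‖∫ ω, (A.indicator 1 (X m ω) - μ.real A) * (A.indicator 1 (X (m + k) ω) - μ.real A) ∂P‖ₑ ≤
      eLpNorm (fun x => (ν.rnDeriv μ x).toReal) p μ *
        (2 * μ A ^ s.toReal⁻¹ *
          (ENNReal.ofReal (Function.update γ 0 1 k) * (2 * μ A ^ (2 : ℝ≥0∞).toReal⁻¹))) := by
  set φ : EuclideanSpace ℝ (Fin d) → ℝ := fun x => A.indicator 1 x - μ.real A
  have hφ : Measurable φ := (measurable_const.indicator hA).sub measurable_const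
  have hφb : ∀ x, ‖φ x‖ ≤ 1 := norm_indicator_one_sub_measureReal_le_one μ A
  have hPkφ : AEStronglyMeasurable (fun x => ∫ y, φ y ∂kiter d K k x) μ :=
    (hφ.stronglyMeasurable.integral_kernel (κ := kiter d K k)).aestronglyMeasurable
  have hq1 : 1 ≤ q := ENNReal.HolderConjugate.one_le q p
  calc _ ≤ eLpNorm (fun x => (ν.rnDeriv μ x).toReal) p μ *
        eLpNorm (fun x => φ x * ∫ y, φ y ∂kiter d K k x) q μ :=
      hM.enorm_integral_mul_comp_add_le hX hX0 hνμ hμ hq hφ hφb hφ hφb m k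
    _ ≤ eLpNorm (fun x => (ν.rnDeriv μ x).toReal) p μ *
        (eLpNorm φ s μ * eLpNorm (fun x => ∫ y, φ y ∂kiter d K k x) 2 μ) := by
      gcongr
      simpa using eLpNorm_le_eLpNorm_mul_eLpNorm'_of_norm hφ.aestronglyMeasurable hPkφ
        (· * ·) 1 (ae_of_all _ fun x => by simp [norm_mul])
    _ ≤ _ := by
      gcongr
      · exact eLpNorm_indicator_one_sub_le hA (hq1.trans (ENNReal.HolderTriple.le s 2 q)) hs
      · exact (hK.eLpNorm_integral_kiter_indicator_sub_le hA k).trans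
          (by gcongr; exact eLpNorm_indicator_one_sub_le hA one_le_two ENNReal.ofNat_ne_top)

theorem HasMarkovTransition.abs_integral_indicator_sub_mul_le (hM : HasMarkovTransition K X P)
    (hX : ∀ n, Measurable (X n)) (hX0 : P.map (X 0) = ν) (hνμ : ν ≪ μ)
    (hμ : μ.bind (fun x => K x) = μ) {γ : ℕ → ℝ} (hK : HasL2Decay K μ γ) (hγ : ∀ n, 0 ≤ γ n)
    {r : ℝ} (hr : 2 < r) (hrn : MemLp (fun x => (ν.rnDeriv μ x).toReal) (ENNReal.ofReal r) μ)
    {A : Set (EuclideanSpace ℝ (Fin d))} (hA : MeasurableSet A) (m k : ℕ) :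
    |∫ ω, (A.indicator 1 (X m ω) - μ.real A) * (A.indicator 1 (X (m + k) ω) - μ.real A) ∂P| ≤
      4 * (eLpNorm (fun x => (ν.rnDeriv μ x).toReal) (ENNReal.ofReal r) μ).toReal *
        μ.real A ^ ((r - 1) / r) * Function.update γ 0 1 k := by
  -- Hölder exponents with `1/r + 1/q = 1` and `1/q = 1/s + 1/2`
  set q : ℝ := r / (r - 1)
  set s : ℝ := 2 * r / (r - 2)
  have : (ENNReal.ofReal r).HolderConjugate (ENNReal.ofReal q) :=
    (Real.HolderConjugate.conjExponent (by linarith)).ennrealOfReal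
  have : (ENNReal.ofReal s).HolderTriple 2 (ENNReal.ofReal q) := by
    have h : Real.HolderTriple s 2 q :=
      ⟨by simp only [q, s]; field_simp; ring, by simp only [s]; positivity, two_pos⟩
    simpa using h.ennrealOfReal
  have hγk : 0 ≤ Function.update γ 0 1 k := Function.update_nonneg hγ 0 zero_le_one k
  have h := ENNReal.toReal_mono (by finiteness) (hM.enorm_integral_indicator_sub_mul_le
    (p := ENNReal.ofReal r) (q := ENNReal.ofReal q) (s := ENNReal.ofReal s) hX hX0 hνμ hμ hK
    ENNReal.ofReal_ne_top ENNReal.ofReal_ne_top hA m k)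
  simp only [ENNReal.toReal_mul, ← ENNReal.toReal_rpow, ENNReal.toReal_ofReal hγk,
    ENNReal.toReal_ofReal (by positivity : 0 ≤ s), ENNReal.toReal_ofNat, ← measureReal_def] at h
  have hexp : μ.real A ^ s⁻¹ * μ.real A ^ (2 : ℝ)⁻¹ = μ.real A ^ ((r - 1) / r) := by
    rw [← Real.rpow_add' measureReal_nonneg (by positivity)]
    congr 1
    simp only [s]
    field_simp
    ring
  exact h.trans_eq (by rw [← hexp]; ring)

theorem HasMarkovTransition.integral_abs_empMeas_sub_le (hM : HasMarkovTransition K X P)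
    (hX : ∀ n, Measurable (X n)) (hX0 : P.map (X 0) = ν) (hνμ : ν ≪ μ)
    (hμ : μ.bind (fun x => K x) = μ) {γ : ℕ → ℝ} (hK : HasL2Decay K μ γ) (hγ : ∀ n, 0 ≤ γ n)
    (hγs : Summable γ) {r : ℝ} (hr : 2 < r)
    (hrn : MemLp (fun x => (ν.rnDeriv μ x).toReal) (ENNReal.ofReal r) μ)
    {A : Set (EuclideanSpace ℝ (Fin d))} (hA : MeasurableSet A) {N : ℕ} (hN : N ≠ 0) :
    ∫ ω, |((empMeas d N fun k => X (k + 1) ω) A).toReal - μ.real A| ∂P ≤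
      √(8 * (eLpNorm (fun x => (ν.rnDeriv μ x).toReal) (ENNReal.ofReal r) μ).toReal *
          ∑' n, Function.update γ 0 1 n) * μ.real A ^ ((r - 1) / (2 * r)) *
        (N : ℝ) ^ (-(1 : ℝ) / 2) := by
  set H := (eLpNorm (fun x => (ν.rnDeriv μ x).toReal) (ENNReal.ofReal r) μ).toReal
  set c := Function.update γ 0 1
  set a := μ.real A
  set D := 4 * H * a ^ ((r - 1) / r)
  have hc0 : ∀ n, 0 ≤ c n := Function.update_nonneg hγ 0 zero_le_one
  have hcov (m k : ℕ) : |∫ ω, (A.indicator 1 (X (m + 1) ω) - a) *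
      (A.indicator 1 (X (m + k + 1) ω) - a) ∂P| ≤ D * c k := by
    rw [Nat.add_right_comm]
    exact hM.abs_integral_indicator_sub_mul_le hX hX0 hνμ hμ hK hγ hr hrn hA (m + 1) k
  have hY (j : ℕ) : MemLp (fun ω => A.indicator 1 (X (j + 1) ω) - a) 2 P :=
    .of_bound (((measurable_const.indicator hA).comp (hX _)).sub
      measurable_const).aestronglyMeasurable 1
      (ae_of_all _ fun ω => norm_indicator_one_sub_measureReal_le_one μ A _)
  calc ∫ ω, |((empMeas d N fun k => X (k + 1) ω) A).toReal - a| ∂P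
      = ∫ ω, |(N : ℝ)⁻¹ * ∑ j ∈ Finset.range N, (A.indicator 1 (X (j + 1) ω) - a)| ∂P := by
        simp_rw [empMeas_apply_toReal_sub d hN _ hA]
    _ ≤ √(2 * ∑' n, D * c n) * (N : ℝ) ^ (-(1 : ℝ) / 2) :=
        integral_abs_average_le_of_abs_integral_mul_add_le hY
          (fun n => mul_nonneg (by positivity) (hc0 n))
          ((hγs.update 0 1).mul_left D) hcov N
    _ = √(8 * H * ∑' n, c n) * a ^ ((r - 1) / (2 * r)) * (N : ℝ) ^ (-(1 : ℝ) / 2) := by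
        rw [_root_.tsum_mul_left, show 2 * (D * ∑' n, c n) =
          8 * H * (∑' n, c n) * a ^ ((r - 1) / r) by ring,
          Real.sqrt_mul (mul_nonneg (by positivity) (tsum_nonneg hc0)),
          Real.sqrt_eq_rpow (a ^ _), ← Real.rpow_mul measureReal_nonneg]
        congr 3
        field_simp

end IteratedKernel

theorem markov_chain_empirical_L1_bound_general
    (d : ℕ) (r : ℝ) (hr : 2 < r)
    (K : ProbabilityTheory.Kernel (EuclideanSpace ℝ (Fin d)) (EuclideanSpace ℝ (Fin d)))
    (hK : ProbabilityTheory.IsMarkovKernel K)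
    (ν invμ : Measure (EuclideanSpace ℝ (Fin d)))
    (hν : IsProbabilityMeasure ν) (hπ : IsProbabilityMeasure invμ)
    (hinv : invμ.bind (fun x => K x) = invμ)
    (ρ : ℕ → ℝ) (hρpos : ∀ n, 0 ≤ ρ n) (hρsum : Summable ρ)
    (C0 : ℝ) (hC0 : 0 < C0)
    -- L² decay of the semigroup
    (hdecay : ∀ n : ℕ, 1 ≤ n → ∀ f : EuclideanSpace ℝ (Fin d) → ℝ, MemLp f 2 invμ →
      eLpNorm (fun x => (∫ y, f y ∂(kiter d K n x)) - ∫ y, f y ∂invμ) 2 invμ ≤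
        ENNReal.ofReal (C0 * ρ n) * eLpNorm (fun x => f x - ∫ y, f y ∂invμ) 2 invμ)
    (habs : ν ≪ invμ)
    (hrn : MemLp (fun x => (ν.rnDeriv invμ x).toReal) (ENNReal.ofReal r) invμ) :
    ∃ C : ℝ, 0 < C ∧
      ∀ (Ω : Type) (_ : MeasurableSpace Ω) (P : Measure Ω), IsProbabilityMeasure P →
      ∀ X : ℕ → Ω → EuclideanSpace ℝ (Fin d),
        (∀ n, Measurable (X n)) →
        Measure.map (X 0) P = ν →
        -- Markov property with transition kernel `K`
        (∀ n : ℕ, Measure.map (fun ω => ((fun i : Fin (n + 1) => X i ω), X (n + 1) ω)) P =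
          (Measure.map (fun ω (i : Fin (n + 1)) => X i ω) P) ⊗ₘ
            (K.comap (fun v : Fin (n + 1) → EuclideanSpace ℝ (Fin d) => v (Fin.last n))
              (measurable_pi_apply _))) →
      ∀ A : Set (EuclideanSpace ℝ (Fin d)), MeasurableSet A → ∀ N : ℕ, 1 ≤ N →
        ∫ ω, |((empMeas d N fun k => X (k + 1) ω) A).toReal - (invμ A).toReal| ∂P ≤
          C * (invμ A).toReal ^ ((r - 1) / (2 * r)) * (N : ℝ) ^ (-(1 : ℝ) / 2) := by
  set H := (eLpNorm (fun x => (ν.rnDeriv invμ x).toReal) (ENNReal.ofReal r) invμ).toReal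
  set c := Function.update (fun n => C0 * ρ n) 0 1
  have hc0 : ∀ n, 0 ≤ c n :=
    Function.update_nonneg (fun n => mul_nonneg hC0.le (hρpos n)) 0 zero_le_one
  have hc_pos : 0 < ∑' n, c n := zero_lt_one.trans_le (by
    simpa [c] using ((hρsum.mul_left C0).update 0 1).le_tsum 0 fun n _ => hc0 n)
  refine ⟨√(8 * (H + 1) * ∑' n, c n), by positivity, ?_⟩
  intro Ω _ P _ X hX hX0 (hM : HasMarkovTransition K X P) A hA N hN
  refine (hM.integral_abs_empMeas_sub_le hX hX0 habs hinv hdecay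
    (fun n => mul_nonneg hC0.le (hρpos n)) (hρsum.mul_left C0) hr hrn hA (by omega)).trans ?_
  rw [measureReal_def]
  gcongr
  exact le_add_of_nonneg_right zero_le_one

/-- Key estimate in the proof of Theorem 17 of Fournier-Guillin: for a Markov chain with
`L²`-decay, summable rates, and initial law `ν` with `dν/dπ ∈ L^r(invμ)` (`r > 2`),
`E_ν|μ_N(A) - invμ(A)| ≤ C invμ(A)^{(r-1)/(2r)} N^{-1/2}`. -/
theorem markov_chain_empirical_L1_bound
    (d : ℕ) (hd : 1 ≤ d) (r : ℝ) (hr : 2 < r)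
    (K : ProbabilityTheory.Kernel (EuclideanSpace ℝ (Fin d)) (EuclideanSpace ℝ (Fin d)))
    (hK : ProbabilityTheory.IsMarkovKernel K)
    (ν invμ : Measure (EuclideanSpace ℝ (Fin d)))
    (hν : IsProbabilityMeasure ν) (hπ : IsProbabilityMeasure invμ)
    (hinv : invμ.bind (fun x => K x) = invμ)
    (ρ : ℕ → ℝ) (hρpos : ∀ n, 0 ≤ ρ n) (hρsum : Summable ρ)
    (C0 : ℝ) (hC0 : 0 < C0)
    -- L² decay of the semigroup
    (hdecay : ∀ n : ℕ, 1 ≤ n → ∀ f : EuclideanSpace ℝ (Fin d) → ℝ, MemLp f 2 invμ →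
      eLpNorm (fun x => (∫ y, f y ∂(kiter d K n x)) - ∫ y, f y ∂invμ) 2 invμ ≤
        ENNReal.ofReal (C0 * ρ n) * eLpNorm (fun x => f x - ∫ y, f y ∂invμ) 2 invμ)
    (habs : ν ≪ invμ)
    (hrn : MemLp (fun x => (ν.rnDeriv invμ x).toReal) (ENNReal.ofReal r) invμ) :
    ∃ C : ℝ, 0 < C ∧
      ∀ (Ω : Type) (_ : MeasurableSpace Ω) (P : Measure Ω), IsProbabilityMeasure P →
      ∀ X : ℕ → Ω → EuclideanSpace ℝ (Fin d),
        (∀ n, Measurable (X n)) →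
        Measure.map (X 0) P = ν →
        -- Markov property with transition kernel `K`
        (∀ n : ℕ, Measure.map (fun ω => ((fun i : Fin (n + 1) => X i ω), X (n + 1) ω)) P =
          (Measure.map (fun ω (i : Fin (n + 1)) => X i ω) P) ⊗ₘ
            (K.comap (fun v : Fin (n + 1) → EuclideanSpace ℝ (Fin d) => v (Fin.last n))
              (measurable_pi_apply _))) →
      ∀ A : Set (EuclideanSpace ℝ (Fin d)), MeasurableSet A → ∀ N : ℕ, 1 ≤ N →
        ∫ ω, |((empMeas d N fun k => X (k + 1) ω) A).toReal - (invμ A).toReal| ∂P ≤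
          C * (invμ A).toReal ^ ((r - 1) / (2 * r)) * (N : ℝ) ^ (-(1 : ℝ) / 2) :=
  markov_chain_empirical_L1_bound_general d r hr K hK ν invμ hν hπ hinv ρ hρpos hρsum C0 hC0 hdecay
    habs hrn

end
end
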